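/- arXiv:2305.06503 — 3 statements merged into one kernel-verified Lean document; each statement's English description precedes it below -/
import Mathlib

section
/- Let G be a bicritical graph whose vertex set is covered by two sets S1 and S2 with S1 ∩ S2 = {u, v}, where {u, v} is a 2-vertex cut of G with uv an edge of G, such that every edge of G joins two vertices of S1 or two vertices of S2, and the induced subgraphs G1 = G[S1] and G2 = G[S2] are connected and have more than two vertices (note uv is an edge of both G1 and G2). Then for i = 1, 2, DE(G_i) ∪ {uv} = DE(G) ∩ E(G_i), where DE(H) denotes the set of deletable edges of a bicritical graph H. -/
/-- A graph `G` (on at least four vertices) is *bicritical* if for every pair of distinct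
vertices `u, v`, the graph `G − {u, v}` has a perfect matching, i.e. there is a matching
subgraph of `G` whose vertex set is exactly the complement of `{u, v}`. -/
def Bicritical {V : Type*} (G : SimpleGraph V) : Prop :=
  4 ≤ Nat.card V ∧ ∀ u v : V, u ≠ v →
    ∃ M : G.Subgraph, M.IsMatching ∧ M.verts = ({u, v}ᶜ : Set V)

/-- A bicritical graph is *minimal* if deleting any edge destroys bicriticality. -/
def MinimalBicritical {V : Type*} (G : SimpleGraph V) : Prop :=
  Bicritical G ∧ ∀ e ∈ G.edgeSet, ¬ Bicritical (G.deleteEdges {e})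

/-- A connected graph with at least two vertices is *matching covered* if every edge
lies in a perfect matching. -/
def MatchingCovered {V : Type*} (G : SimpleGraph V) : Prop :=
  2 ≤ Nat.card V ∧ G.Connected ∧
    ∀ e ∈ G.edgeSet, ∃ M : G.Subgraph, M.IsPerfectMatching ∧ e ∈ M.edgeSet

/-- A graph is *3-connected* if it has more than three vertices and removing any set of
fewer than three vertices leaves a connected graph. -/
def ThreeConnected {V : Type*} (G : SimpleGraph V) : Prop :=
  3 < Nat.card V ∧ ∀ X : Set V, X.ncard < 3 → (G.induce (Xᶜ : Set V)).Connected

/-- A *brick* is a 3-connected bicritical graph. -/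
def IsBrick {V : Type*} (G : SimpleGraph V) : Prop :=
  ThreeConnected G ∧ Bicritical G

/-- A brick is *minimal* if deleting any edge yields a graph that is not a brick. -/
def MinimalBrick {V : Type*} (G : SimpleGraph V) : Prop :=
  IsBrick G ∧ ∀ e ∈ G.edgeSet, ¬ IsBrick (G.deleteEdges {e})

/-- `{u, v}` is a *2-vertex cut* of `G`: `u ≠ v` and `G − {u, v}` is disconnected. -/
def IsTwoCut {V : Type*} (G : SimpleGraph V) (u v : V) : Prop :=
  u ≠ v ∧ ¬ (G.induce ({u, v}ᶜ : Set V)).Connected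

/-- The set of *deletable* edges of a bicritical graph: those edges whose deletion leaves
a bicritical graph. -/
def DeletableEdges {V : Type*} (G : SimpleGraph V) : Set (Sym2 V) :=
  {e | e ∈ G.edgeSet ∧ Bicritical (G.deleteEdges {e})}

open Set

namespace BicritAux

variable {V : Type*}

/-- existence of a matching with prescribed vertex set -/
def HasMatch (G : SimpleGraph V) (A : Set V) : Prop :=
  ∃ M : G.Subgraph, M.IsMatching ∧ M.verts = A

section lift

variable {G : SimpleGraph V} {S : Set V}

/-- lift a subgraph of an induced subgraph to a subgraph of the ambient graph -/
def glift (M : (G.induce S).Subgraph) : G.Subgraph where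
  verts := Subtype.val '' M.verts
  Adj a b := ∃ (ha : a ∈ S) (hb : b ∈ S), M.Adj ⟨a, ha⟩ ⟨b, hb⟩
  adj_sub := by rintro a b ⟨ha, hb, h⟩; exact M.adj_sub h
  edge_vert := by rintro a b ⟨ha, hb, h⟩; exact ⟨_, M.edge_vert h, rfl⟩
  symm := ⟨by rintro a b ⟨ha, hb, h⟩; exact ⟨hb, ha, h.symm⟩⟩

@[simp] lemma glift_verts (M : (G.induce S).Subgraph) :
    (glift M).verts = Subtype.val '' M.verts := rfl

lemma glift_isMatching {M : (G.induce S).Subgraph} (h : M.IsMatching) :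
    (glift M).IsMatching := by
  rintro a ⟨a0, ha0, rfl⟩
  obtain ⟨b0, hb0, hb0u⟩ := h ha0
  refine ⟨b0, ⟨a0.2, b0.2, by simpa using hb0⟩, ?_⟩
  rintro y ⟨hy1, hy2, hy⟩
  have := hb0u ⟨y, hy2⟩ (by simpa using hy)
  exact congrArg Subtype.val this

/-- restrict a subgraph of the ambient graph to an induced subgraph -/
def grestrict (M : G.Subgraph) (S : Set V) : (G.induce S).Subgraph where
  verts := {a : S | ∃ b : S, M.Adj ↑a ↑b}
  Adj a b := M.Adj ↑a ↑b
  adj_sub := fun h => M.adj_sub h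
  edge_vert := fun {_ b} h => ⟨b, h⟩
  symm := ⟨fun _ _ h => M.adj_symm h⟩

lemma grestrict_isMatching {M : G.Subgraph} (h : M.IsMatching) :
    (grestrict M S).IsMatching := by
  rintro a ⟨b, hb⟩
  have hav : (a : V) ∈ M.verts := M.edge_vert hb
  obtain ⟨c, hc, hcu⟩ := h hav
  refine ⟨b, hb, ?_⟩
  rintro y hy
  exact Subtype.val_injective ((hcu _ hy).trans (hcu _ hb).symm)

/-- transfer a matching avoiding an edge down to the edge-deleted graph -/
lemma hasMatch_deleteEdges {M : G.Subgraph} (hM : M.IsMatching) {e : Sym2 V}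
    (hav : ∀ a b, M.Adj a b → s(a, b) ≠ e) :
    HasMatch (G.deleteEdges {e}) M.verts := by
  refine ⟨⟨M.verts, M.Adj, fun {a b} h => ?_, M.edge_vert, M.symm⟩, hM, rfl⟩
  rw [SimpleGraph.deleteEdges_adj]
  exact ⟨M.adj_sub h, by simpa using hav a b h⟩

/-- deleting both endpoints of a matching edge keeps a matching -/
lemma isMatching_deleteVerts_pair {M : G.Subgraph} (hM : M.IsMatching) {p q : V}
    (hpq : M.Adj p q) : (M.deleteVerts {p, q}).IsMatching := by
  rintro a ha
  rw [SimpleGraph.Subgraph.deleteVerts_verts] at ha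
  obtain ⟨haM, hanpq⟩ := ha
  obtain ⟨b, hb, hbu⟩ := hM haM
  obtain ⟨c, hc, hcu⟩ := hM (M.edge_vert hpq)
  have hq : q = c := hcu q hpq
  have hbp : b ≠ p := by
    rintro rfl
    exact hanpq (by simp [(hcu a hb.symm).trans hq.symm])
  have hbq : b ≠ q := by
    rintro rfl
    obtain ⟨d, hd, hdu⟩ := hM (M.edge_vert hpq.symm)
    have := (hdu a hb.symm).trans (hdu p hpq.symm).symm
    exact hanpq (by simp [this])
  refine ⟨b, ?_, ?_⟩
  · exact SimpleGraph.Subgraph.deleteVerts_adj.mpr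
      ⟨haM, hanpq, M.edge_vert hb.symm, by simp [hbp, hbq], hb⟩
  · intro y hy
    exact hbu y (SimpleGraph.Subgraph.deleteVerts_adj.mp hy).2.2.2.2

/-- a matching of `G` together with an edge with both new endpoints -/
lemma isMatching_sup_edge {M : G.Subgraph} (hM : M.IsMatching) {p q : V} (hpq : G.Adj p q)
    (hp : p ∉ M.verts) (hq : q ∉ M.verts) :
    (M ⊔ G.subgraphOfAdj hpq).IsMatching ∧
      (M ⊔ G.subgraphOfAdj hpq).verts = M.verts ∪ {p, q} := by
  constructor
  · refine hM.sup (SimpleGraph.Subgraph.IsMatching.subgraphOfAdj hpq) ?_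
    rw [hM.support_eq_verts,
      (SimpleGraph.Subgraph.IsMatching.subgraphOfAdj hpq).support_eq_verts]
    rw [SimpleGraph.subgraphOfAdj_verts]
    rw [Set.disjoint_iff]
    rintro x ⟨hx1, hx2⟩
    simp only [Set.mem_insert_iff, Set.mem_singleton_iff] at hx2
    rcases hx2 with rfl | rfl
    exacts [hp hx1, hq hx1]
  · simp

end lift

lemma image_compl_pair {S : Set V} (a b : ↥S) :
    Subtype.val '' (({a, b}ᶜ : Set ↥S)) = S \ {(a : V), (b : V)} := by
  ext x
  constructor
  · rintro ⟨⟨x0, hx0⟩, hmem, rfl⟩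
    simp only [Set.mem_compl_iff, Set.mem_insert_iff, Set.mem_singleton_iff] at hmem
    push_neg at hmem
    refine ⟨hx0, ?_⟩
    simp only [Set.mem_insert_iff, Set.mem_singleton_iff]
    push_neg
    exact ⟨fun h => hmem.1 (Subtype.ext h), fun h => hmem.2 (Subtype.ext h)⟩
  · rintro ⟨hxS, hx⟩
    simp only [Set.mem_insert_iff, Set.mem_singleton_iff] at hx
    push_neg at hx
    refine ⟨⟨x, hxS⟩, ?_, rfl⟩
    simp only [Set.mem_compl_iff, Set.mem_insert_iff, Set.mem_singleton_iff]
    push_neg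
    exact ⟨fun h => hx.1 (congrArg Subtype.val h), fun h => hx.2 (congrArg Subtype.val h)⟩

lemma GE1 (G : SimpleGraph V) (S : Set V) (e : Sym2 ↥S) :
    (G.deleteEdges {Sym2.map Subtype.val e}).induce S = (G.induce S).deleteEdges {e} := by
  ext a b
  simp only [SimpleGraph.comap_adj, Function.Embedding.coe_subtype,
    SimpleGraph.deleteEdges_adj, Set.mem_singleton_iff]
  have : s((a : V), (b : V)) = Sym2.map Subtype.val e ↔ s(a, b) = e := by
    rw [← Sym2.map_pair_eq]
    exact (Sym2.map.injective Subtype.val_injective).eq_iff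
  tauto

lemma GE2 (G : SimpleGraph V) (S : Set V) (e : Sym2 V)
    (h : ∀ a b : ↥S, s((a : V), (b : V)) ≠ e) :
    (G.deleteEdges {e}).induce S = G.induce S := by
  ext a b
  simp only [SimpleGraph.comap_adj, Function.Embedding.coe_subtype,
    SimpleGraph.deleteEdges_adj, Set.mem_singleton_iff]
  have := h a b
  tauto

lemma matching_even_ncard {W : Type*} [Finite W] {Γ : SimpleGraph W} {M : Γ.Subgraph}
    (h : M.IsMatching) : Even M.verts.ncard := by
  have : Fintype ↥M.verts := Fintype.ofFinite _
  rw [Set.ncard_eq_toFinset_card']; exact h.even_card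

lemma subset_pair_even {W : Type*} {T : Set W} {p q : W} (hT : T ⊆ {p, q}) (hpq : p ≠ q)
    (he : Even T.ncard) : T = ∅ ∨ T = {p, q} := by
  have hfin : T.Finite := (Set.toFinite ({p, q} : Set W)).subset hT
  have hle : T.ncard ≤ ({p, q} : Set W).ncard := Set.ncard_le_ncard hT (Set.toFinite _)
  rw [Set.ncard_pair hpq] at hle
  obtain ⟨k, hk⟩ := he
  have : T.ncard = 0 ∨ T.ncard = 2 := by omega
  rcases this with h0 | h2
  · exact Or.inl ((Set.ncard_eq_zero hfin).mp h0)
  · exact Or.inr (Set.eq_of_subset_of_ncard_le hT (by rw [Set.ncard_pair hpq, h2]) (Set.toFinite _))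

lemma even_ncard_compl_pair {W : Type*} [Finite W] {p q : W} (hpq : p ≠ q)
    (h : Even (Nat.card W)) : Even (({p, q}ᶜ : Set W).ncard) := by
  have hh := Set.ncard_add_ncard_compl ({p, q} : Set W)
  rw [Set.ncard_pair hpq] at hh
  obtain ⟨k, hk⟩ := h
  exact ⟨k - 1, by omega⟩

/-- Perfect matching of a bicritical graph avoiding a prescribed edge. -/
lemma avoidPM {W : Type*} [Finite W] {Γ : SimpleGraph W} (hb : Bicritical Γ) {p q : W}
    (hpq : p ≠ q) :
    ∃ N : Γ.Subgraph, N.IsMatching ∧ N.verts = Set.univ ∧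
      ∀ a b, N.Adj a b → s(a, b) ≠ s(p, q) := by
  have hw : ∃ w, w ∉ ({p, q} : Set W) := by
    by_contra hcon
    push_neg at hcon
    have huniv : (Set.univ : Set W) = {p, q} := Set.eq_univ_iff_forall.mpr hcon ▸ rfl
    have h1 : (Set.univ : Set W).ncard = Nat.card W := Set.ncard_univ W
    have h2 : ({p, q} : Set W).ncard = 2 := Set.ncard_pair hpq
    rw [huniv, h2] at h1
    have := hb.1
    omega
  obtain ⟨w, hw⟩ := hw
  simp only [Set.mem_insert_iff, Set.mem_singleton_iff] at hw
  push_neg at hw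
  obtain ⟨M, hM, hMv⟩ := hb.2 q w hw.2.symm
  have hpM : p ∈ M.verts := by
    rw [hMv]
    simp only [Set.mem_compl_iff, Set.mem_insert_iff, Set.mem_singleton_iff]
    push_neg
    exact ⟨hpq, hw.1.symm⟩
  obtain ⟨z, hz, -⟩ := hM hpM
  have hzq : z ≠ q := by
    rintro rfl
    have := hMv ▸ M.edge_vert hz.symm
    simp at this
  have hpz : Γ.Adj p z := M.adj_sub hz
  obtain ⟨N0, hN0, hN0v⟩ := hb.2 p z hpz.ne
  have hpn : p ∉ N0.verts := by rw [hN0v]; simp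
  have hzn : z ∉ N0.verts := by rw [hN0v]; simp
  obtain ⟨hsupm, hsupv⟩ := isMatching_sup_edge hN0 hpz hpn hzn
  refine ⟨N0 ⊔ Γ.subgraphOfAdj hpz, hsupm, ?_, ?_⟩
  · rw [hsupv, hN0v, Set.compl_union_self]
  · intro a b hab
    rcases hab with hab | hab
    · intro he
      have hane : a ≠ p := fun h => hpn (h ▸ N0.edge_vert hab)
      have hbne : b ≠ p := fun h => hpn (h ▸ N0.edge_vert hab.symm)
      rw [Sym2.eq_iff] at he
      tauto
    · rw [SimpleGraph.subgraphOfAdj_adj] at hab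
      intro he
      rw [← hab, Sym2.eq_iff] at he
      rcases he with ⟨-, h2⟩ | ⟨h1, -⟩
      exacts [hzq h2, hpq h1]

/-- combine matchings of the two sides -/
lemma combine {H : SimpleGraph V} {S1 S2 : Set V} {A1 : Set ↥S1} {A2 : Set ↥S2}
    (h1 : HasMatch (H.induce S1) A1) (h2 : HasMatch (H.induce S2) A2)
    (hd : Disjoint (Subtype.val '' A1) (Subtype.val '' A2)) :
    HasMatch H (Subtype.val '' A1 ∪ Subtype.val '' A2) := by
  obtain ⟨M1, hm1, rfl⟩ := h1
  obtain ⟨M2, hm2, rfl⟩ := h2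
  refine ⟨glift M1 ⊔ glift M2, ?_, by simp⟩
  refine (glift_isMatching hm1).sup (glift_isMatching hm2) ?_
  rw [(glift_isMatching hm1).support_eq_verts, (glift_isMatching hm2).support_eq_verts]
  simpa using hd

structure Decomp (H : SimpleGraph V) (S1 S2 : Set V) (u v : V) : Prop where
  cover : S1 ∪ S2 = Set.univ
  inter : S1 ∩ S2 = {u, v}
  hu1 : u ∈ S1
  hv1 : v ∈ S1
  hu2 : u ∈ S2
  hv2 : v ∈ S2
  hne : u ≠ v
  hedges : ∀ a b : V, H.Adj a b → (a ∈ S1 ∧ b ∈ S1) ∨ (a ∈ S2 ∧ b ∈ S2)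

namespace Decomp

variable {H H' G : SimpleGraph V} {S1 S2 : Set V} {u v : V}

lemma swap (d : Decomp H S1 S2 u v) : Decomp H S2 S1 u v where
  cover := by rw [Set.union_comm]; exact d.cover
  inter := by rw [Set.inter_comm]; exact d.inter
  hu1 := d.hu2
  hv1 := d.hv2
  hu2 := d.hu1
  hv2 := d.hv1
  hne := d.hne
  hedges := fun a b h => (d.hedges a b h).symm

lemma mono (d : Decomp H S1 S2 u v) (hle : ∀ a b, H'.Adj a b → H.Adj a b) :
    Decomp H' S1 S2 u v where
  cover := d.cover
  inter := d.inter
  hu1 := d.hu1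
  hv1 := d.hv1
  hu2 := d.hu2
  hv2 := d.hv2
  hne := d.hne
  hedges := fun a b h => d.hedges a b (hle a b h)

lemma not_mem2 (d : Decomp H S1 S2 u v) {a : V} (ha : a ∈ S1) (h : a ∉ ({u, v} : Set V)) :
    a ∉ S2 := fun h2 => h (d.inter ▸ (⟨ha, h2⟩ : a ∈ S1 ∩ S2))

lemma mem_or (d : Decomp H S1 S2 u v) (a : V) : a ∈ S1 ∨ a ∈ S2 := by
  have : a ∈ S1 ∪ S2 := d.cover ▸ Set.mem_univ a
  exact this

/-- a covered vertex of `S1` which is not `u,v` has its partner in `S1` -/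
lemma restrict_mem (d : Decomp H S1 S2 u v) {M : H.Subgraph} (hM : M.IsMatching) {a : ↥S1}
    (hav : (a : V) ∈ M.verts) (hauv : (a : V) ∉ ({u, v} : Set V)) :
    ∃ b : ↥S1, M.Adj ↑a ↑b := by
  obtain ⟨b, hb, -⟩ := hM hav
  rcases d.hedges _ _ (M.adj_sub hb) with ⟨-, h⟩ | ⟨h2, -⟩
  · exact ⟨⟨b, h⟩, hb⟩
  · exact absurd h2 (d.not_mem2 a.2 hauv)

end Decomp

section finite

variable [Finite V] {H G : SimpleGraph V} {S1 S2 : Set V} {u v : V}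

lemma Decomp.even1 (d : Decomp H S1 S2 u v)
    (hbH : ∀ x y : V, x ≠ y → HasMatch H ({x, y}ᶜ)) : Even (Nat.card ↥S1) := by
  obtain ⟨M, hM, hMv⟩ := hbH u v d.hne
  have hRv : (grestrict M S1).verts = ({⟨u, d.hu1⟩, ⟨v, d.hv1⟩}ᶜ : Set ↥S1) := by
    ext a
    constructor
    · rintro ⟨b, hb⟩
      have hav := hMv ▸ M.edge_vert hb
      simp only [Set.mem_compl_iff, Set.mem_insert_iff, Set.mem_singleton_iff] at hav ⊢
      push_neg at hav ⊢
      exact ⟨fun h => hav.1 (congrArg Subtype.val h), fun h => hav.2 (congrArg Subtype.val h)⟩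
    · intro ha
      simp only [Set.mem_compl_iff, Set.mem_insert_iff, Set.mem_singleton_iff] at ha
      push_neg at ha
      have hauv : (a : V) ∉ ({u, v} : Set V) := by
        simp only [Set.mem_insert_iff, Set.mem_singleton_iff]
        push_neg
        exact ⟨fun h => ha.1 (Subtype.ext h), fun h => ha.2 (Subtype.ext h)⟩
      have hav : (a : V) ∈ M.verts := by
        rw [hMv]; simpa using hauv
      exact d.restrict_mem hM hav hauv
  have heven := matching_even_ncard (grestrict_isMatching hM (S := S1))
  rw [hRv] at heven
  have hne1 : (⟨u, d.hu1⟩ : ↥S1) ≠ ⟨v, d.hv1⟩ := fun h => d.hne (congrArg Subtype.val h)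
  have hh := Set.ncard_add_ncard_compl ({⟨u, d.hu1⟩, ⟨v, d.hv1⟩} : Set ↥S1)
  rw [Set.ncard_pair hne1] at hh
  obtain ⟨k, hk⟩ := heven
  exact ⟨k + 1, by omega⟩

lemma Decomp.restrict (d : Decomp H S1 S2 u v) (huvH : H.Adj u v)
    (heven : Even (Nat.card ↥S1)) {x y : V} (hx : x ∈ S1) (hy : y ∈ S1) (hxy : x ≠ y)
    (hm : HasMatch H ({x, y}ᶜ)) :
    HasMatch (H.induce S1) ({⟨x, hx⟩, ⟨y, hy⟩}ᶜ : Set ↥S1) := by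
  obtain ⟨M, hM, hMv⟩ := hm
  have hRm := grestrict_isMatching hM (S := S1)
  have hsub : (grestrict M S1).verts ⊆ ({⟨x, hx⟩, ⟨y, hy⟩}ᶜ : Set ↥S1) := by
    rintro a ⟨b, hb⟩
    have hav := hMv ▸ M.edge_vert hb
    simp only [Set.mem_compl_iff, Set.mem_insert_iff, Set.mem_singleton_iff] at hav ⊢
    push_neg at hav ⊢
    exact ⟨fun h => hav.1 (congrArg Subtype.val h), fun h => hav.2 (congrArg Subtype.val h)⟩
  have hmem : ∀ a : ↥S1, (a : V) ∉ ({x, y} : Set V) → (a : V) ∉ ({u, v} : Set V) →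
      a ∈ (grestrict M S1).verts := by
    intro a h1 h2
    exact d.restrict_mem hM (by rw [hMv]; simpa using h1) h2
  set T := (({⟨x, hx⟩, ⟨y, hy⟩}ᶜ : Set ↥S1)) \ (grestrict M S1).verts with hT
  have hTsub : T ⊆ {⟨u, d.hu1⟩, ⟨v, d.hv1⟩} := by
    rintro a ⟨ha1, ha2⟩
    by_contra hcon
    apply ha2
    simp only [Set.mem_compl_iff, Set.mem_insert_iff, Set.mem_singleton_iff] at ha1 hcon
    push_neg at ha1 hcon
    refine hmem a ?_ ?_ <;>
      · simp only [Set.mem_insert_iff, Set.mem_singleton_iff]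
        push_neg
        first
        | exact ⟨fun h => ha1.1 (Subtype.ext h), fun h => ha1.2 (Subtype.ext h)⟩
        | exact ⟨fun h => hcon.1 (Subtype.ext h), fun h => hcon.2 (Subtype.ext h)⟩
  have hxy1 : (⟨x, hx⟩ : ↥S1) ≠ ⟨y, hy⟩ := fun h => hxy (congrArg Subtype.val h)
  have hTeven : Even T.ncard := by
    have h1 : Even (grestrict M S1).verts.ncard := matching_even_ncard hRm
    have hsplit : T.ncard + (grestrict M S1).verts.ncard =
        (({⟨x, hx⟩, ⟨y, hy⟩}ᶜ : Set ↥S1)).ncard := by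
      rw [← Set.ncard_union_eq (Set.disjoint_sdiff_left) (Set.toFinite _) (Set.toFinite _),
        Set.diff_union_of_subset hsub]
    have hce : Even ((({⟨x, hx⟩, ⟨y, hy⟩}ᶜ : Set ↥S1)).ncard) :=
      even_ncard_compl_pair hxy1 heven
    obtain ⟨k1, hk1⟩ := h1
    obtain ⟨k2, hk2⟩ := hce
    exact ⟨k2 - k1, by omega⟩
  have hneuv : (⟨u, d.hu1⟩ : ↥S1) ≠ ⟨v, d.hv1⟩ := fun h => d.hne (congrArg Subtype.val h)
  rcases subset_pair_even hTsub hneuv hTeven with hT0 | hTuv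
  · have hsup : (({⟨x, hx⟩, ⟨y, hy⟩}ᶜ : Set ↥S1)) ⊆ (grestrict M S1).verts :=
      Set.diff_eq_empty.mp hT0
    exact ⟨grestrict M S1, hRm, Set.Subset.antisymm hsub hsup⟩
  · have huR : (⟨u, d.hu1⟩ : ↥S1) ∉ (grestrict M S1).verts :=
      (hTuv ▸ (Set.mem_insert _ _) : (⟨u, d.hu1⟩ : ↥S1) ∈ T).2
    have hvR : (⟨v, d.hv1⟩ : ↥S1) ∉ (grestrict M S1).verts :=
      (hTuv ▸ (Set.mem_insert_iff.mpr (Or.inr rfl)) : (⟨v, d.hv1⟩ : ↥S1) ∈ T).2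
    have hRv : (grestrict M S1).verts =
        (({⟨x, hx⟩, ⟨y, hy⟩}ᶜ : Set ↥S1)) \ {⟨u, d.hu1⟩, ⟨v, d.hv1⟩} := by
      rw [← hTuv, hT, Set.diff_diff_cancel_left hsub]
    have hadj1 : (H.induce S1).Adj ⟨u, d.hu1⟩ ⟨v, d.hv1⟩ := huvH
    obtain ⟨hsm, hsv⟩ := isMatching_sup_edge hRm hadj1 huR hvR
    refine ⟨_, hsm, ?_⟩
    rw [hsv, hRv, Set.diff_union_of_subset (hTuv ▸ Set.diff_subset)]

lemma Decomp.bicritical_induce1 (d : Decomp H S1 S2 u v) (hb : Bicritical H)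
    (huvH : H.Adj u v) (hc1 : 2 < Nat.card ↥S1) : Bicritical (H.induce S1) := by
  have heven : Even (Nat.card ↥S1) := d.even1 (fun x y h => hb.2 x y h)
  constructor
  · obtain ⟨k, hk⟩ := heven
    omega
  · intro p q hpq
    have hpq' : (p : V) ≠ q := fun h => hpq (Subtype.ext h)
    obtain ⟨M, h1, h2⟩ := d.restrict huvH heven p.2 q.2 hpq' (hb.2 _ _ hpq')
    exact ⟨M, h1, h2⟩

lemma Decomp.setlem1 (d : Decomp H S1 S2 u v) {x y : V} (hx : x ∈ S1) (hy : y ∈ S1) :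
    (S1 \ {x, y}) ∪ (S2 \ {u, v}) = ({x, y}ᶜ : Set V) := by
  ext a
  simp only [Set.mem_union, Set.mem_diff, Set.mem_compl_iff, Set.mem_insert_iff,
    Set.mem_singleton_iff]
  constructor
  · rintro (⟨-, h⟩ | ⟨ha2, h⟩)
    · tauto
    · push_neg at h
      have hns1 : a ∉ S1 := d.swap.not_mem2 ha2 (by
        simp only [Set.mem_insert_iff, Set.mem_singleton_iff]; push_neg; exact h)
      push_neg
      exact ⟨fun hax => hns1 (hax ▸ hx), fun hay => hns1 (hay ▸ hy)⟩
  · intro h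
    push_neg at h
    rcases d.mem_or a with h1 | h2
    · exact Or.inl ⟨h1, by tauto⟩
    · by_cases hauv : a = u ∨ a = v
      · rcases hauv with rfl | rfl
        · exact Or.inl ⟨d.hu1, by tauto⟩
        · exact Or.inl ⟨d.hv1, by tauto⟩
      · push_neg at hauv
        exact Or.inr ⟨h2, by tauto⟩

lemma Decomp.disj1 (d : Decomp H S1 S2 u v) {x y : V} :
    Disjoint (S1 \ {x, y}) (S2 \ {u, v}) := by
  rw [Set.disjoint_left]
  rintro a ⟨h1, -⟩ ⟨h2, h3⟩
  exact h3 (d.inter ▸ (⟨h1, h2⟩ : a ∈ S1 ∩ S2))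

lemma Decomp.setlem2 (d : Decomp H S1 S2 u v) {x y : V} (hx1 : x ∈ S1) (hx2 : x ∉ S2)
    (hy1 : y ∈ S1) (hy2 : y ∉ S2) :
    ((S1 \ {x, y}) \ {u, v}) ∪ S2 = ({x, y}ᶜ : Set V) := by
  ext a
  simp only [Set.mem_union, Set.mem_diff, Set.mem_compl_iff, Set.mem_insert_iff,
    Set.mem_singleton_iff]
  constructor
  · rintro (⟨⟨-, h⟩, -⟩ | h2)
    · tauto
    · push_neg
      exact ⟨fun hax => hx2 (hax ▸ h2), fun hay => hy2 (hay ▸ h2)⟩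
  · intro h
    push_neg at h
    rcases d.mem_or a with h1 | h2
    · by_cases ha2 : a ∈ S2
      · exact Or.inr ha2
      · refine Or.inl ⟨⟨h1, by tauto⟩, ?_⟩
        push_neg
        constructor
        · rintro rfl; exact ha2 d.hu2
        · rintro rfl; exact ha2 d.hv2
    · exact Or.inr h2

lemma Decomp.disj2 (d : Decomp H S1 S2 u v) {x y : V} :
    Disjoint ((S1 \ {x, y}) \ {u, v}) S2 := by
  rw [Set.disjoint_left]
  rintro a ⟨⟨h1, -⟩, h3⟩ h2
  exact h3 (d.inter ▸ (⟨h1, h2⟩ : a ∈ S1 ∩ S2))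

lemma Decomp.setlem3 (d : Decomp H S1 S2 u v) {x y : V} (hx1 : x ∈ S1) (hx2 : x ∉ S2)
    (hy2 : y ∈ S2) (hy1 : y ∉ S1) :
    (S1 \ {x, v}) ∪ (S2 \ {y, u}) = ({x, y}ᶜ : Set V) := by
  ext a
  simp only [Set.mem_union, Set.mem_diff, Set.mem_compl_iff, Set.mem_insert_iff,
    Set.mem_singleton_iff]
  constructor
  · rintro (⟨h1, h⟩ | ⟨h2, h⟩)
    · push_neg at h
      push_neg
      exact ⟨h.1, fun hay => hy1 (hay ▸ h1)⟩
    · push_neg at h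
      push_neg
      exact ⟨fun hax => hx2 (hax ▸ h2), h.1⟩
  · intro h
    push_neg at h
    rcases d.mem_or a with h1 | h2
    · by_cases hav : a = v
      · subst hav
        refine Or.inr ⟨d.hv2, ?_⟩
        push_neg
        exact ⟨fun hvy => hy1 (hvy ▸ d.hv1), fun hvu => d.hne hvu.symm⟩
      · exact Or.inl ⟨h1, by tauto⟩
    · by_cases hau : a = u
      · subst hau
        refine Or.inl ⟨d.hu1, ?_⟩
        push_neg
        exact ⟨fun hux => hx2 (hux ▸ d.hu2), fun huv => d.hne huv⟩
      · exact Or.inr ⟨h2, by tauto⟩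

lemma Decomp.disj3 (d : Decomp H S1 S2 u v) {x y : V} :
    Disjoint (S1 \ {x, v}) (S2 \ {y, u}) := by
  rw [Set.disjoint_left]
  rintro a ⟨h1, ha1⟩ ⟨h2, ha2⟩
  simp only [Set.mem_insert_iff, Set.mem_singleton_iff] at ha1 ha2
  push_neg at ha1 ha2
  have : a ∈ ({u, v} : Set V) := d.inter ▸ (⟨h1, h2⟩ : a ∈ S1 ∩ S2)
  simp only [Set.mem_insert_iff, Set.mem_singleton_iff] at this
  rcases this with rfl | rfl
  · exact ha2.2 rfl
  · exact ha1.2 rfl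

lemma Decomp.combine_bicritical (d : Decomp H S1 S2 u v)
    (hb1 : Bicritical (H.induce S1)) (hb2 : Bicritical (H.induce S2)) : Bicritical H := by
  constructor
  · have h1 := hb1.1
    have hle : Nat.card ↥S1 ≤ Nat.card V :=
      Nat.card_le_card_of_injective _ Subtype.val_injective
    omega
  intro x y hxy
  have key : ∀ x y : V, x ≠ y → x ∈ S1 → y ∈ S1 →
      ∃ M : H.Subgraph, M.IsMatching ∧ M.verts = ({x, y}ᶜ : Set V) := by
    intro x y hxy hx hy
    have hm1 : HasMatch (H.induce S1) (({⟨x, hx⟩, ⟨y, hy⟩}ᶜ : Set ↥S1)) :=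
      hb1.2 ⟨x, hx⟩ ⟨y, hy⟩ (fun h => hxy (congrArg Subtype.val h))
    have hm2 : HasMatch (H.induce S2) (({⟨u, d.hu2⟩, ⟨v, d.hv2⟩}ᶜ : Set ↥S2)) :=
      hb2.2 _ _ (fun h => d.hne (congrArg Subtype.val h))
    have hc := combine hm1 hm2 (by
      rw [image_compl_pair, image_compl_pair]
      exact d.disj1)
    rw [image_compl_pair, image_compl_pair, d.setlem1 hx hy] at hc
    exact hc
  by_cases h1 : x ∈ S1 ∧ y ∈ S1
  · exact key x y hxy h1.1 h1.2
  by_cases h2 : x ∈ S2 ∧ y ∈ S2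
  · -- symmetric via swap
    have hm2 : HasMatch (H.induce S2) (({⟨x, h2.1⟩, ⟨y, h2.2⟩}ᶜ : Set ↥S2)) :=
      hb2.2 _ _ (fun h => hxy (congrArg Subtype.val h))
    have hm1 : HasMatch (H.induce S1) (({⟨u, d.hu1⟩, ⟨v, d.hv1⟩}ᶜ : Set ↥S1)) :=
      hb1.2 _ _ (fun h => d.hne (congrArg Subtype.val h))
    have hc := combine hm2 hm1 (by
      rw [image_compl_pair, image_compl_pair]
      exact d.swap.disj1)
    rw [image_compl_pair, image_compl_pair, d.swap.setlem1 h2.1 h2.2] at hc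
    exact hc
  -- mixed case
  have hmix : (x ∈ S1 ∧ x ∉ S2 ∧ y ∈ S2 ∧ y ∉ S1) ∨ (y ∈ S1 ∧ y ∉ S2 ∧ x ∈ S2 ∧ x ∉ S1) := by
    rcases d.mem_or x with hx1 | hx2 <;> rcases d.mem_or y with hy1 | hy2 <;> tauto
  have mkey : ∀ x y : V, x ∈ S1 → x ∉ S2 → y ∈ S2 → y ∉ S1 →
      ∃ M : H.Subgraph, M.IsMatching ∧ M.verts = ({x, y}ᶜ : Set V) := by
    intro x y hx1 hx2 hy2 hy1
    have hm1 : HasMatch (H.induce S1) (({⟨x, hx1⟩, ⟨v, d.hv1⟩}ᶜ : Set ↥S1)) :=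
      hb1.2 _ _ (fun h => hx2 (by rw [show x = v from congrArg Subtype.val h]; exact d.hv2))
    have hm2 : HasMatch (H.induce S2) (({⟨y, hy2⟩, ⟨u, d.hu2⟩}ᶜ : Set ↥S2)) :=
      hb2.2 _ _ (fun h => hy1 (by rw [show y = u from congrArg Subtype.val h]; exact d.hu1))
    have hc := combine hm1 hm2 (by
      rw [image_compl_pair, image_compl_pair]
      exact d.disj3)
    rw [image_compl_pair, image_compl_pair, d.setlem3 hx1 hx2 hy2 hy1] at hc
    exact hc
  rcases hmix with ⟨hx1, hx2, hy2, hy1⟩ | ⟨hy1', hy2', hx2', hx1'⟩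
  · exact mkey x y hx1 hx2 hy2 hy1
  · obtain ⟨M, hM, hMv⟩ := mkey y x hy1' hy2' hx2' hx1'
    exact ⟨M, hM, by rw [hMv, Set.pair_comm]⟩


lemma Decomp.LB_mixed (d : Decomp G S1 S2 u v) (hb : Bicritical G) (hadj : G.Adj u v)
    (hc1 : 2 < Nat.card ↥S1) (hc2 : 2 < Nat.card ↥S2)
    {x y : V} (hx1 : x ∈ S1) (hx2 : x ∉ S2) (hy2 : y ∈ S2) (hy1 : y ∉ S1) :
    HasMatch (G.deleteEdges {s(u, v)}) ({x, y}ᶜ : Set V) := by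
  have hb1 := d.bicritical_induce1 hb hadj hc1
  have hb2 := d.swap.bicritical_induce1 hb hadj hc2
  have hge1 : (G.deleteEdges {s(u, v)}).induce S1 =
      (G.induce S1).deleteEdges {s((⟨u, d.hu1⟩ : ↥S1), ⟨v, d.hv1⟩)} := by
    have := GE1 G S1 (s((⟨u, d.hu1⟩ : ↥S1), ⟨v, d.hv1⟩))
    rwa [Sym2.map_pair_eq] at this
  have hge2 : (G.deleteEdges {s(u, v)}).induce S2 =
      (G.induce S2).deleteEdges {s((⟨u, d.hu2⟩ : ↥S2), ⟨v, d.hv2⟩)} := by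
    have := GE1 G S2 (s((⟨u, d.hu2⟩ : ↥S2), ⟨v, d.hv2⟩))
    rwa [Sym2.map_pair_eq] at this
  obtain ⟨M1, hM1, hM1v⟩ := hb1.2 ⟨x, hx1⟩ ⟨v, d.hv1⟩
    (fun h => hx2 (by rw [show x = v from congrArg Subtype.val h]; exact d.hv2))
  obtain ⟨M2, hM2, hM2v⟩ := hb2.2 ⟨y, hy2⟩ ⟨u, d.hu2⟩
    (fun h => hy1 (by rw [show y = u from congrArg Subtype.val h]; exact d.hu1))
  have hav1 : ∀ a b, M1.Adj a b → s(a, b) ≠ s((⟨u, d.hu1⟩ : ↥S1), ⟨v, d.hv1⟩) := by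
    intro a b hab he
    have hbv : (⟨v, d.hv1⟩ : ↥S1) ∉ M1.verts := by rw [hM1v]; simp
    rw [Sym2.eq_iff] at he
    rcases he with ⟨-, hb1'⟩ | ⟨ha1', -⟩
    · exact hbv (hb1' ▸ M1.edge_vert hab.symm)
    · exact hbv (ha1' ▸ M1.edge_vert hab)
  have hav2 : ∀ a b, M2.Adj a b → s(a, b) ≠ s((⟨u, d.hu2⟩ : ↥S2), ⟨v, d.hv2⟩) := by
    intro a b hab he
    have hbv : (⟨u, d.hu2⟩ : ↥S2) ∉ M2.verts := by rw [hM2v]; simp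
    rw [Sym2.eq_iff] at he
    rcases he with ⟨ha1', -⟩ | ⟨-, hb1'⟩
    · exact hbv (ha1' ▸ M2.edge_vert hab)
    · exact hbv (hb1' ▸ M2.edge_vert hab.symm)
  have h1 := hasMatch_deleteEdges hM1 hav1
  rw [hM1v, ← hge1] at h1
  have h2 := hasMatch_deleteEdges hM2 hav2
  rw [hM2v, ← hge2] at h2
  have hc := combine h1 h2 (by
    rw [image_compl_pair, image_compl_pair]
    exact d.disj3)
  rw [image_compl_pair, image_compl_pair, d.setlem3 hx1 hx2 hy2 hy1] at hc
  exact hc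

lemma Decomp.LB_side (d : Decomp G S1 S2 u v) (hb : Bicritical G) (hadj : G.Adj u v)
    (hc1 : 2 < Nat.card ↥S1) (hc2 : 2 < Nat.card ↥S2)
    {x y : V} (hx : x ∈ S1) (hy : y ∈ S1) (hxy : x ≠ y) :
    HasMatch (G.deleteEdges {s(u, v)}) ({x, y}ᶜ : Set V) := by
  have hb1 := d.bicritical_induce1 hb hadj hc1
  have hb2 := d.swap.bicritical_induce1 hb hadj hc2
  have hge1 : (G.deleteEdges {s(u, v)}).induce S1 =
      (G.induce S1).deleteEdges {s((⟨u, d.hu1⟩ : ↥S1), ⟨v, d.hv1⟩)} := by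
    have := GE1 G S1 (s((⟨u, d.hu1⟩ : ↥S1), ⟨v, d.hv1⟩))
    rwa [Sym2.map_pair_eq] at this
  have hge2 : (G.deleteEdges {s(u, v)}).induce S2 =
      (G.induce S2).deleteEdges {s((⟨u, d.hu2⟩ : ↥S2), ⟨v, d.hv2⟩)} := by
    have := GE1 G S2 (s((⟨u, d.hu2⟩ : ↥S2), ⟨v, d.hv2⟩))
    rwa [Sym2.map_pair_eq] at this
  obtain ⟨M1, hM1, hM1v⟩ := hb1.2 ⟨x, hx⟩ ⟨y, hy⟩ (fun h => hxy (congrArg Subtype.val h))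
  by_cases hM1uv : M1.Adj ⟨u, d.hu1⟩ ⟨v, d.hv1⟩
  · -- `uv` is an edge of the matching on side 1
    have hu1m := M1.edge_vert hM1uv
    have hv1m := M1.edge_vert hM1uv.symm
    rw [hM1v] at hu1m hv1m
    have hux : u ≠ x ∧ u ≠ y := by
      simp only [Set.mem_compl_iff, Set.mem_insert_iff, Set.mem_singleton_iff] at hu1m
      push_neg at hu1m
      exact ⟨fun h => hu1m.1 (Subtype.ext h), fun h => hu1m.2 (Subtype.ext h)⟩
    have hvx : v ≠ x ∧ v ≠ y := by
      simp only [Set.mem_compl_iff, Set.mem_insert_iff, Set.mem_singleton_iff] at hv1m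
      push_neg at hv1m
      exact ⟨fun h => hv1m.1 (Subtype.ext h), fun h => hv1m.2 (Subtype.ext h)⟩
    have hxnot : x ∉ S2 := by
      intro hxs2
      have hxm : x ∈ ({u, v} : Set V) := d.inter ▸ (⟨hx, hxs2⟩ : x ∈ S1 ∩ S2)
      simp only [Set.mem_insert_iff, Set.mem_singleton_iff] at hxm
      rcases hxm with rfl | rfl
      · exact hux.1 rfl
      · exact hvx.1 rfl
    have hynot : y ∉ S2 := by
      intro hys2
      have hym : y ∈ ({u, v} : Set V) := d.inter ▸ (⟨hy, hys2⟩ : y ∈ S1 ∩ S2)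
      simp only [Set.mem_insert_iff, Set.mem_singleton_iff] at hym
      rcases hym with rfl | rfl
      · exact hux.2 rfl
      · exact hvx.2 rfl
    have hM1'm := isMatching_deleteVerts_pair hM1 hM1uv
    have hM1'v : (M1.deleteVerts {⟨u, d.hu1⟩, ⟨v, d.hv1⟩}).verts =
        (({⟨x, hx⟩, ⟨y, hy⟩}ᶜ : Set ↥S1)) \ {⟨u, d.hu1⟩, ⟨v, d.hv1⟩} := by
      rw [SimpleGraph.Subgraph.deleteVerts_verts, hM1v]
    have hav1 : ∀ a b, (M1.deleteVerts {⟨u, d.hu1⟩, ⟨v, d.hv1⟩}).Adj a b →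
        s(a, b) ≠ s((⟨u, d.hu1⟩ : ↥S1), ⟨v, d.hv1⟩) := by
      intro a b hab he
      have h' := SimpleGraph.Subgraph.deleteVerts_adj.mp hab
      rw [Sym2.eq_iff] at he
      rcases he with ⟨ha', -⟩ | ⟨-, hb'⟩
      · exact h'.2.1 (by rw [ha']; simp)
      · exact h'.2.2.2.1 (by rw [hb']; simp)
    have h1 := hasMatch_deleteEdges hM1'm hav1
    rw [hM1'v, ← hge1] at h1
    obtain ⟨N, hN, hNv, hNav⟩ :=
      avoidPM hb2 (p := (⟨u, d.hu2⟩ : ↥S2)) (q := ⟨v, d.hv2⟩)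
        (fun h => d.hne (congrArg Subtype.val h))
    have h2 := hasMatch_deleteEdges hN hNav
    rw [hNv, ← hge2] at h2
    have hc := combine h1 h2 (by
      rw [Set.image_diff Subtype.val_injective, image_compl_pair, Set.image_pair,
        Set.image_univ, Subtype.range_coe]
      exact d.disj2)
    rw [Set.image_diff Subtype.val_injective, image_compl_pair, Set.image_pair,
      Set.image_univ, Subtype.range_coe, d.setlem2 hx hxnot hy hynot] at hc
    exact hc
  · -- the matching on side 1 avoids `uv`
    have hav1 : ∀ a b, M1.Adj a b → s(a, b) ≠ s((⟨u, d.hu1⟩ : ↥S1), ⟨v, d.hv1⟩) := by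
      intro a b hab he
      rw [Sym2.eq_iff] at he
      rcases he with ⟨rfl, rfl⟩ | ⟨rfl, rfl⟩
      · exact hM1uv hab
      · exact hM1uv hab.symm
    have h1 := hasMatch_deleteEdges hM1 hav1
    rw [hM1v, ← hge1] at h1
    obtain ⟨M2, hM2, hM2v⟩ := hb2.2 ⟨u, d.hu2⟩ ⟨v, d.hv2⟩
      (fun h => d.hne (congrArg Subtype.val h))
    have hav2 : ∀ a b, M2.Adj a b → s(a, b) ≠ s((⟨u, d.hu2⟩ : ↥S2), ⟨v, d.hv2⟩) := by
      intro a b hab he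
      have hbv : (⟨u, d.hu2⟩ : ↥S2) ∉ M2.verts := by rw [hM2v]; simp
      rw [Sym2.eq_iff] at he
      rcases he with ⟨ha1', -⟩ | ⟨-, hb1'⟩
      · exact hbv (ha1' ▸ M2.edge_vert hab)
      · exact hbv (hb1' ▸ M2.edge_vert hab.symm)
    have h2 := hasMatch_deleteEdges hM2 hav2
    rw [hM2v, ← hge2] at h2
    have hc := combine h1 h2 (by
      rw [image_compl_pair, image_compl_pair]
      exact d.disj1)
    rw [image_compl_pair, image_compl_pair, d.setlem1 hx hy] at hc
    exact hc

lemma Decomp.LB (d : Decomp G S1 S2 u v) (hb : Bicritical G) (hadj : G.Adj u v)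
    (hc1 : 2 < Nat.card ↥S1) (hc2 : 2 < Nat.card ↥S2) :
    Bicritical (G.deleteEdges {s(u, v)}) := by
  refine ⟨hb.1, ?_⟩
  intro x y hxy
  by_cases h1 : x ∈ S1 ∧ y ∈ S1
  · exact d.LB_side hb hadj hc1 hc2 h1.1 h1.2 hxy
  by_cases h2 : x ∈ S2 ∧ y ∈ S2
  · exact d.swap.LB_side hb hadj hc2 hc1 h2.1 h2.2 hxy
  have hmix : (x ∈ S1 ∧ x ∉ S2 ∧ y ∈ S2 ∧ y ∉ S1) ∨
      (y ∈ S1 ∧ y ∉ S2 ∧ x ∈ S2 ∧ x ∉ S1) := by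
    rcases d.mem_or x with hx1 | hx2 <;> rcases d.mem_or y with hy1 | hy2 <;> tauto
  rcases hmix with ⟨ha, hb', hc, hd'⟩ | ⟨ha, hb', hc, hd'⟩
  · exact d.LB_mixed hb hadj hc1 hc2 ha hb' hc hd'
  · obtain ⟨M, hM, hMv⟩ := d.LB_mixed hb hadj hc1 hc2 ha hb' hc hd'
    exact ⟨M, hM, by rw [hMv, Set.pair_comm]⟩

lemma Decomp.LC (d : Decomp G S1 S2 u v) (hb : Bicritical G) (hadj : G.Adj u v)
    (hc1 : 2 < Nat.card ↥S1) (hc2 : 2 < Nat.card ↥S2) {p q : ↥S1}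
    (hpq : (G.induce S1).Adj p q)
    (hne : s(p, q) ≠ s((⟨u, d.hu1⟩ : ↥S1), ⟨v, d.hv1⟩))
    (hbe : Bicritical ((G.induce S1).deleteEdges {s(p, q)})) :
    Bicritical (G.deleteEdges {s((p : V), (q : V))}) := by
  have hd' : Decomp (G.deleteEdges {s((p : V), (q : V))}) S1 S2 u v :=
    d.mono (fun a b h => (SimpleGraph.deleteEdges_adj.mp h).1)
  have h1 : Bicritical ((G.deleteEdges {s((p : V), (q : V))}).induce S1) := by
    have hge := GE1 G S1 (s(p, q))
    rw [Sym2.map_pair_eq] at hge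
    rw [hge]
    exact hbe
  have h2 : Bicritical ((G.deleteEdges {s((p : V), (q : V))}).induce S2) := by
    rw [GE2]
    · exact d.swap.bicritical_induce1 hb hadj hc2
    · intro a b he
      rw [Sym2.eq_iff] at he
      have hp2 : (p : V) ∈ S2 ∧ (q : V) ∈ S2 := by
        rcases he with ⟨ha, hb'⟩ | ⟨ha, hb'⟩
        · exact ⟨ha ▸ a.2, hb' ▸ b.2⟩
        · exact ⟨hb' ▸ b.2, ha ▸ a.2⟩
      have hpm : (p : V) ∈ ({u, v} : Set V) := d.inter ▸ (⟨p.2, hp2.1⟩ : (p : V) ∈ S1 ∩ S2)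
      have hqm : (q : V) ∈ ({u, v} : Set V) := d.inter ▸ (⟨q.2, hp2.2⟩ : (q : V) ∈ S1 ∩ S2)
      have hpq' : (p : V) ≠ (q : V) := fun hh => hpq.ne (Subtype.ext hh)
      simp only [Set.mem_insert_iff, Set.mem_singleton_iff] at hpm hqm
      apply hne
      rcases hpm with hpu | hpv <;> rcases hqm with hqu | hqv
      · exact absurd (hpu.trans hqu.symm) hpq'
      · rw [Sym2.eq_iff]; left; exact ⟨Subtype.ext hpu, Subtype.ext hqv⟩
      · rw [Sym2.eq_iff]; right; exact ⟨Subtype.ext hpv, Subtype.ext hqu⟩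
      · exact absurd (hpv.trans hqv.symm) hpq'
  exact hd'.combine_bicritical h1 h2

lemma Decomp.final (d : Decomp G S1 S2 u v) (hb : Bicritical G) (hadj : G.Adj u v)
    (hc1 : 2 < Nat.card ↥S1) (hc2 : 2 < Nat.card ↥S2) :
    Sym2.map (Subtype.val : S1 → V) ''
        (DeletableEdges (G.induce S1) ∪ {s((⟨u, d.hu1⟩ : ↥S1), (⟨v, d.hv1⟩ : ↥S1))}) =
      DeletableEdges G ∩ (Sym2.map (Subtype.val : S1 → V) '' (G.induce S1).edgeSet) := by
  apply Set.ext
  intro e'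
  constructor
  · rintro ⟨e, he, rfl⟩
    induction e using Sym2.ind with
    | _ p q =>
    have hedge : (G.induce S1).Adj p q := by
      rcases he with h | h
      · exact (SimpleGraph.mem_edgeSet _).mp h.1
      · rw [Set.mem_singleton_iff] at h
        have : s(p, q) ∈ (G.induce S1).edgeSet := by
          rw [h]
          exact (SimpleGraph.mem_edgeSet _).mpr hadj
        exact (SimpleGraph.mem_edgeSet _).mp this
    have hDEG : Sym2.map Subtype.val s(p, q) ∈ DeletableEdges G := by
      constructor
      · rw [Sym2.map_pair_eq]
        exact (SimpleGraph.mem_edgeSet _).mpr hedge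
      · by_cases hcase : s(p, q) = s((⟨u, d.hu1⟩ : ↥S1), ⟨v, d.hv1⟩)
        · rw [Sym2.map_pair_eq]
          have heq : s((p : V), (q : V)) = s(u, v) := by
            rw [← Sym2.map_pair_eq (Subtype.val) p q, hcase, Sym2.map_pair_eq]
          rw [heq]
          exact d.LB hb hadj hc1 hc2
        · rcases he with h | h
          · rw [Sym2.map_pair_eq]
            exact d.LC hb hadj hc1 hc2 hedge hcase h.2
          · exact absurd (Set.mem_singleton_iff.mp h) hcase
    exact ⟨hDEG, ⟨s(p, q), (SimpleGraph.mem_edgeSet _).mpr hedge, rfl⟩⟩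
  · rintro ⟨⟨hEdge, hBic⟩, e, he, rfl⟩
    induction e using Sym2.ind with
    | _ p q =>
    by_cases hcase : s(p, q) = s((⟨u, d.hu1⟩ : ↥S1), ⟨v, d.hv1⟩)
    · exact ⟨s(p, q), Or.inr (Set.mem_singleton_iff.mpr hcase), rfl⟩
    · refine ⟨s(p, q), Or.inl ⟨he, ?_⟩, rfl⟩
      have hBic' : Bicritical (G.deleteEdges {s((p : V), (q : V))}) := by
        rw [Sym2.map_pair_eq] at hBic
        exact hBic
      have hd' : Decomp (G.deleteEdges {s((p : V), (q : V))}) S1 S2 u v :=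
        d.mono (fun a b h => (SimpleGraph.deleteEdges_adj.mp h).1)
      have huv' : (G.deleteEdges {s((p : V), (q : V))}).Adj u v := by
        rw [SimpleGraph.deleteEdges_adj]
        refine ⟨hadj, ?_⟩
        simp only [Set.mem_singleton_iff]
        intro hEq
        apply hcase
        apply Sym2.map.injective Subtype.val_injective
        rw [Sym2.map_pair_eq, Sym2.map_pair_eq]
        exact hEq.symm
      have hind := hd'.bicritical_induce1 hBic' huv' hc1
      have hge := GE1 G S1 (s(p, q))
      rw [Sym2.map_pair_eq] at hge
      rwa [hge] at hind


end finite

end BicritAux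


/-- Deletable edges and decomposition along a 2-vertex cut `{u, v}` with `uv ∈ E(G)`:
for `i = 1, 2`, `DE(Gᵢ) ∪ {uv} = DE(G) ∩ E(Gᵢ)` (edges of `Gᵢ = G[Sᵢ]` viewed as edges of
`G` via the inclusion of the vertex subset). -/
theorem deletableEdges_decomposition_adj {V : Type*} [Fintype V]
    (G : SimpleGraph V) (S1 S2 : Set V) (u v : V) (huv : u ≠ v)
    (hbc : Bicritical G) (hcut : IsTwoCut G u v) (hadj : G.Adj u v)
    (hcover : S1 ∪ S2 = Set.univ) (hinter : S1 ∩ S2 = {u, v})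
    (hu1 : u ∈ S1) (hv1 : v ∈ S1) (hu2 : u ∈ S2) (hv2 : v ∈ S2)
    (hedges : ∀ a b : V, G.Adj a b → (a ∈ S1 ∧ b ∈ S1) ∨ (a ∈ S2 ∧ b ∈ S2))
    (hconn1 : (G.induce S1).Connected) (hconn2 : (G.induce S2).Connected)
    (hcard1 : 2 < Nat.card S1) (hcard2 : 2 < Nat.card S2) :
    Sym2.map (Subtype.val : S1 → V) ''
        (DeletableEdges (G.induce S1) ∪ {s((⟨u, hu1⟩ : S1), (⟨v, hv1⟩ : S1))}) =
      DeletableEdges G ∩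
        (Sym2.map (Subtype.val : S1 → V) '' (G.induce S1).edgeSet) ∧
    Sym2.map (Subtype.val : S2 → V) ''
        (DeletableEdges (G.induce S2) ∪ {s((⟨u, hu2⟩ : S2), (⟨v, hv2⟩ : S2))}) =
      DeletableEdges G ∩
        (Sym2.map (Subtype.val : S2 → V) '' (G.induce S2).edgeSet) := by
  have d : BicritAux.Decomp G S1 S2 u v :=
    ⟨hcover, hinter, hu1, hv1, hu2, hv2, huv, hedges⟩
  exact ⟨d.final hbc hadj hcard1 hcard2, d.swap.final hbc hadj hcard2 hcard1⟩
end

section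
/- Let G be a graph whose vertex set is covered by two sets S1 and S2 with S1 ∩ S2 = {u, v}, where {u, v} is a 2-vertex cut of G with uv not an edge of G, such that every edge of G joins two vertices of S1 or two vertices of S2, and the induced subgraphs G1' = G[S1] and G2' = G[S2] are connected and have more than two vertices. For i = 1, 2, let G_i be G_i' together with the edge uv added. If both G1 and G2 are minimal bicritical, then G is minimal bicritical. -/
set_option linter.unusedSectionVars false
set_option linter.unusedVariables false

open SimpleGraph

namespace BicritAux

variable {V : Type*}

lemma restrictMatch {G' : SimpleGraph V} {M : G'.Subgraph} (hM : M.IsMatching)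
    (W : Set V) (hW : W ⊆ M.verts) (hcl : ∀ a b, M.Adj a b → a ∈ W → b ∈ W) :
    ∃ N : G'.Subgraph, N.IsMatching ∧ N.verts = W ∧
      ∀ a b, N.Adj a b → M.Adj a b ∧ a ∈ W ∧ b ∈ W := by
  refine ⟨⟨W, fun a b => M.Adj a b ∧ a ∈ W ∧ b ∈ W, ?_, ?_, ?_⟩, ?_, rfl, ?_⟩
  · exact fun h => M.adj_sub h.1
  · exact fun h => h.2.1
  · constructor; intro a b h; exact ⟨h.1.symm, h.2.2, h.2.1⟩
  · intro a ha
    obtain ⟨b, hb, hb'⟩ := hM (hW ha)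
    exact ⟨b, ⟨hb, ha, hcl _ _ hb ha⟩, fun c hc => hb' c hc.1⟩
  · exact fun a b h => h

lemma pullMatch {G' : SimpleGraph V} {S : Set V} (H : SimpleGraph S) {N : G'.Subgraph}
    (hN : N.IsMatching) (hverts : N.verts ⊆ S)
    (hadj : ∀ a b (ha : a ∈ S) (hb : b ∈ S), N.Adj a b → H.Adj ⟨a, ha⟩ ⟨b, hb⟩) :
    ∃ P : H.Subgraph, P.IsMatching ∧ P.verts = Subtype.val ⁻¹' N.verts := by
  refine ⟨⟨Subtype.val ⁻¹' N.verts, fun x y => N.Adj x.val y.val, ?_, ?_, ?_⟩, ?_, rfl⟩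
  · intro x y h; exact hadj _ _ x.2 y.2 h
  · intro x y h; exact N.edge_vert h
  · constructor; intro x y h; exact h.symm
  · intro x hx
    obtain ⟨b, hb, hb'⟩ := hN hx
    refine ⟨⟨b, hverts (N.edge_vert hb.symm)⟩, hb, ?_⟩
    intro y hy; exact Subtype.ext (hb' y.val hy)

lemma pushMatch {S : Set V} {H : SimpleGraph S} {M : H.Subgraph} (hM : M.IsMatching)
    (G' : SimpleGraph V) (hadj : ∀ x y : S, M.Adj x y → G'.Adj x.val y.val) :
    ∃ N : G'.Subgraph, N.IsMatching ∧ N.verts = Subtype.val '' M.verts := by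
  refine ⟨⟨Subtype.val '' M.verts,
    fun a b => ∃ (ha : a ∈ S) (hb : b ∈ S), M.Adj ⟨a, ha⟩ ⟨b, hb⟩, ?_, ?_, ?_⟩, ?_, rfl⟩
  · rintro a b ⟨ha, hb, h⟩; exact hadj _ _ h
  · rintro a b ⟨ha, hb, h⟩; exact ⟨⟨a, ha⟩, M.edge_vert h, rfl⟩
  · constructor; rintro a b ⟨ha, hb, h⟩; exact ⟨hb, ha, h.symm⟩
  · rintro a ⟨x, hx, rfl⟩
    obtain ⟨y, hy, hy'⟩ := hM hx
    refine ⟨y.val, ⟨x.2, y.2, hy⟩, ?_⟩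
    intro c hcc
    obtain ⟨hc, hc2, h⟩ := hcc
    exact congrArg Subtype.val (hy' ⟨c, hc2⟩ h)

lemma supMatch {W : Type*} {H : SimpleGraph W} {M N : H.Subgraph}
    (hM : M.IsMatching) (hN : N.IsMatching) (hd : Disjoint M.verts N.verts) :
    (M ⊔ N).IsMatching :=
  hM.sup hN (by rw [hM.support_eq_verts, hN.support_eq_verts]; exact hd)

lemma evenMatch {W : Type*} [Finite W] {H : SimpleGraph W} {M : H.Subgraph}
    (hM : M.IsMatching) : Even M.verts.ncard := by
  classical
  cases nonempty_fintype W
  rw [Set.ncard_eq_toFinset_card']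
  exact hM.even_card

lemma bicritEven {W : Type*} [Finite W] {H : SimpleGraph W} (h : Bicritical H) :
    Even (Nat.card W) := by
  have h4 := h.1
  have : Nontrivial W := by
    exact Finite.one_lt_card_iff_nontrivial.mp (by omega)
  obtain ⟨p, q, hpq⟩ := exists_pair_ne W
  obtain ⟨M, hM, hMv⟩ := h.2 p q hpq
  have he := evenMatch hM
  rw [hMv] at he
  have hc : ({p, q} : Set W).ncard = 2 := Set.ncard_pair hpq
  have hcompl := Set.ncard_add_ncard_compl ({p, q} : Set W)
  rw [hc] at hcompl
  have he' : ({p, q}ᶜ : Set W).ncard = Nat.card W - 2 := by omega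
  rw [he'] at he
  rw [Nat.even_iff] at he ⊢
  omega

lemma existsAdj {W : Type*} {H : SimpleGraph W} (hc : H.Connected) {x t : W} (hxt : x ≠ t) :
    ∃ w, H.Adj x w := by
  obtain ⟨p⟩ := hc.preconnected x t
  cases p with
  | nil => exact absurd rfl hxt
  | cons h _ => exact ⟨_, h⟩

/-- Push a matching of `G[S] + uv` that does not use the edge `uv` down to `G`. -/
lemma pushSide {S : Set V} {u v : V} (G : SimpleGraph V) (huS : u ∈ S) (hvS : v ∈ S)
    {M : (G.induce S ⊔ SimpleGraph.edge (⟨u, huS⟩ : S) (⟨v, hvS⟩ : S)).Subgraph}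
    (hM : M.IsMatching) (hA : ¬ M.Adj ⟨u, huS⟩ ⟨v, hvS⟩) :
    ∃ N : G.Subgraph, N.IsMatching ∧ N.verts = Subtype.val '' M.verts := by
  apply pushMatch hM
  intro p q h
  have h' := M.adj_sub h
  rw [sup_adj] at h'
  rcases h' with h' | h'
  · exact h'
  · exfalso
    rw [edge_adj] at h'
    rcases h'.1 with ⟨rfl, rfl⟩ | ⟨rfl, rfl⟩
    · exact hA h
    · exact hA h.symm

lemma imgComplPair {S : Set V} {p q : V} (hp : p ∈ S) (hq : q ∈ S) :
    Subtype.val '' (({⟨p, hp⟩, ⟨q, hq⟩}ᶜ : Set S)) = S \ {p, q} := by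
  ext a
  simp only [Set.mem_image, Set.mem_compl_iff, Set.mem_insert_iff, Set.mem_singleton_iff,
    Set.mem_diff]
  constructor
  · rintro ⟨b, hb, rfl⟩
    exact ⟨b.2, fun hc => hb (hc.imp (fun h => Subtype.ext h) (fun h => Subtype.ext h))⟩
  · rintro ⟨ha, hnot⟩
    exact ⟨⟨a, ha⟩, fun hc => hnot (hc.imp (fun h => congrArg Subtype.val h)
      (fun h => congrArg Subtype.val h)), rfl⟩

lemma imgPair {S : Set V} {p q : V} (hp : p ∈ S) (hq : q ∈ S) :
    Subtype.val '' (({⟨p, hp⟩, ⟨q, hq⟩} : Set S)) = ({p, q} : Set V) := by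
  rw [Set.image_insert_eq, Set.image_singleton]

lemma preComplPair {S : Set V} {p q : V} (hp : p ∈ S) (hq : q ∈ S) :
    Subtype.val ⁻¹' (S \ {p, q}) = (({⟨p, hp⟩, ⟨q, hq⟩}ᶜ : Set S)) := by
  ext z
  simp only [Set.mem_preimage, Set.mem_diff, Set.mem_insert_iff, Set.mem_singleton_iff,
    Set.mem_compl_iff]
  constructor
  · rintro ⟨-, hz⟩ (rfl | rfl)
    · exact hz (Or.inl rfl)
    · exact hz (Or.inr rfl)
  · intro hz
    exact ⟨z.2, fun hc => hz (hc.imp (fun h => Subtype.ext h) (fun h => Subtype.ext h))⟩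

lemma prePair {S : Set V} {p q : V} (hp : p ∈ S) (hq : q ∈ S) :
    Subtype.val ⁻¹' ({p, q} : Set V) = (({⟨p, hp⟩, ⟨q, hq⟩} : Set S)) := by
  ext z
  simp only [Set.mem_preimage, Set.mem_insert_iff, Set.mem_singleton_iff]
  exact ⟨fun hc => hc.imp (fun h => Subtype.ext h) (fun h => Subtype.ext h),
    fun hc => hc.imp (fun h => congrArg Subtype.val h) (fun h => congrArg Subtype.val h)⟩


variable [Finite V]

/-- The side graph `G[T] + uv` has a perfect matching avoiding the edge `uv`, giving a
matching of `G` covering exactly `T`. -/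
lemma pmAvoid (G : SimpleGraph V) (T : Set V) {u v : V}
    (huv : u ≠ v) (hnadj : ¬ G.Adj u v) (huT : u ∈ T) (hvT : v ∈ T)
    (hconnT : (G.induce T).Connected) (hcardT : 2 < Nat.card T)
    (hT : Bicritical (G.induce T ⊔ SimpleGraph.edge (⟨u, huT⟩ : T) (⟨v, hvT⟩ : T))) :
    ∃ N : G.Subgraph, N.IsMatching ∧ N.verts = T := by
  have hnt : Nontrivial T := Finite.one_lt_card_iff_nontrivial.mp (by omega)
  obtain ⟨t, ht⟩ := exists_ne (⟨u, huT⟩ : T)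
  obtain ⟨w, hw⟩ := existsAdj hconnT (Ne.symm ht)
  have huw : (⟨u, huT⟩ : T) ≠ w := hw.ne
  have hwv : w ≠ (⟨v, hvT⟩ : T) := by
    rintro rfl
    exact hnadj hw
  set GT := G.induce T ⊔ SimpleGraph.edge (⟨u, huT⟩ : T) (⟨v, hvT⟩ : T) with hGT
  obtain ⟨M, hM, hMv⟩ := hT.2 _ _ huw
  have hadjT : GT.Adj (⟨u, huT⟩ : T) w := Or.inl hw
  set Q := GT.subgraphOfAdj hadjT with hQ
  have hPm : (M ⊔ Q).IsMatching := by
    apply supMatch hM (Subgraph.IsMatching.subgraphOfAdj hadjT)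
    rw [hMv]
    simp only [hQ, subgraphOfAdj_verts]
    exact disjoint_compl_left
  have hPv : (M ⊔ Q).verts = Set.univ := by
    rw [Subgraph.verts_sup, hMv]
    simp only [hQ, subgraphOfAdj_verts]
    exact Set.compl_union_self _
  have hPA : ¬ (M ⊔ Q).Adj (⟨u, huT⟩ : T) (⟨v, hvT⟩ : T) := by
    rw [Subgraph.sup_adj]
    rintro (h | h)
    · have := M.edge_vert h
      rw [hMv] at this
      exact this (Or.inl rfl)
    · rw [hQ, subgraphOfAdj_adj, Sym2.eq_iff] at h
      rcases h with ⟨-, h⟩ | ⟨h, -⟩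
      · exact hwv h
      · exact huv (congrArg Subtype.val h)
  obtain ⟨N, hN, hNv⟩ := pushSide G huT hvT hPm hPA
  refine ⟨N, hN, ?_⟩
  rw [hNv, hPv, Subtype.coe_image_univ]

lemma sameSide (G : SimpleGraph V) (S T : Set V) {u v : V} (huv : u ≠ v)
    (hnadj : ¬ G.Adj u v)
    (hcover : S ∪ T = Set.univ) (hinter : S ∩ T = {u, v})
    (huS : u ∈ S) (hvS : v ∈ S) (huT : u ∈ T) (hvT : v ∈ T)
    (hconnT : (G.induce T).Connected) (hcardT : 2 < Nat.card T)
    (hS : Bicritical (G.induce S ⊔ SimpleGraph.edge (⟨u, huS⟩ : S) (⟨v, hvS⟩ : S)))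
    (hT : Bicritical (G.induce T ⊔ SimpleGraph.edge (⟨u, huT⟩ : T) (⟨v, hvT⟩ : T)))
    {x y : V} (hx : x ∈ S) (hy : y ∈ S) (hxy : x ≠ y) :
    ∃ M : G.Subgraph, M.IsMatching ∧ M.verts = ({x, y}ᶜ : Set V) := by
  have hxy₁ : (⟨x, hx⟩ : S) ≠ ⟨y, hy⟩ := fun h => hxy (congrArg Subtype.val h)
  obtain ⟨M1, hM1, hM1v⟩ := hS.2 _ _ hxy₁
  by_cases hA : M1.Adj ⟨u, huS⟩ ⟨v, hvS⟩
  · -- M1 uses the added edge uv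
    have huM : (⟨u, huS⟩ : S) ∈ M1.verts := M1.edge_vert hA
    have hvM : (⟨v, hvS⟩ : S) ∈ M1.verts := M1.edge_vert hA.symm
    rw [hM1v] at huM hvM
    simp only [Set.mem_compl_iff, Set.mem_insert_iff, Set.mem_singleton_iff] at huM hvM
    push_neg at huM hvM
    have hux : u ≠ x := fun h => huM.1 (Subtype.ext h)
    have huy : u ≠ y := fun h => huM.2 (Subtype.ext h)
    have hvx : v ≠ x := fun h => hvM.1 (Subtype.ext h)
    have hvy : v ≠ y := fun h => hvM.2 (Subtype.ext h)
    have hrc : ∀ p q, M1.Adj p q → p ∈ M1.verts \ {⟨u, huS⟩, ⟨v, hvS⟩} →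
        q ∈ M1.verts \ {⟨u, huS⟩, ⟨v, hvS⟩} := by
      rintro p q hpq ⟨hpM, hpN⟩
      refine ⟨M1.edge_vert hpq.symm, ?_⟩
      simp only [Set.mem_insert_iff, Set.mem_singleton_iff] at hpN ⊢
      push_neg at hpN
      rintro (rfl | rfl)
      · obtain ⟨z, hz, hz'⟩ := hM1 (M1.edge_vert hA)
        exact hpN.2 ((hz' _ hpq.symm).trans (hz' _ hA).symm)
      · obtain ⟨z, hz, hz'⟩ := hM1 (M1.edge_vert hA.symm)
        exact hpN.1 ((hz' _ hpq.symm).trans (hz' _ hA.symm).symm)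
    obtain ⟨N1, hN1, hN1v, hN1e⟩ := restrictMatch hM1 _ Set.diff_subset hrc
    have hN1A : ¬ N1.Adj ⟨u, huS⟩ ⟨v, hvS⟩ := by
      intro h
      exact ((hN1e _ _ h).2.1).2 (Or.inl rfl)
    obtain ⟨P1, hP1, hP1v⟩ := pushSide G huS hvS hN1 hN1A
    obtain ⟨P2, hP2, hP2v⟩ := pmAvoid G T huv hnadj huT hvT hconnT hcardT hT
    have hP1v' : P1.verts = (S \ {x, y}) \ {u, v} := by
      rw [hP1v, hN1v, Set.image_diff Subtype.val_injective, hM1v,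
        imgComplPair hx hy, imgPair huS hvS]
    refine ⟨P1 ⊔ P2, supMatch hP1 hP2 ?_, ?_⟩
    · rw [hP1v', hP2v, Set.disjoint_left]
      rintro c ⟨⟨hcS, -⟩, hcuv⟩ hcT
      exact hcuv (hinter ▸ ⟨hcS, hcT⟩)
    · rw [Subgraph.verts_sup, hP1v', hP2v]
      ext c
      simp only [Set.mem_union, Set.mem_diff, Set.mem_compl_iff, Set.mem_insert_iff,
        Set.mem_singleton_iff]
      constructor
      · rintro (⟨⟨-, hc⟩, -⟩ | hcT)
        · exact hc
        · rintro (rfl | rfl)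
          · have : c ∈ S ∩ T := ⟨hx, hcT⟩
            rw [hinter] at this
            rcases this with rfl | rfl
            · exact hux rfl
            · exact hvx rfl
          · have : c ∈ S ∩ T := ⟨hy, hcT⟩
            rw [hinter] at this
            rcases this with rfl | rfl
            · exact huy rfl
            · exact hvy rfl
      · intro hc
        by_cases hcT : c ∈ T
        · exact Or.inr hcT
        · have hcS : c ∈ S := by
            have : c ∈ S ∪ T := hcover ▸ Set.mem_univ c
            rcases this with h | h
            · exact h
            · exact absurd h hcT
          refine Or.inl ⟨⟨hcS, hc⟩, ?_⟩
          rintro (rfl | rfl)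
          · exact hcT huT
          · exact hcT hvT
  · -- M1 avoids the added edge uv
    obtain ⟨P1, hP1, hP1v⟩ := pushSide G huS hvS hM1 hA
    have hP1v' : P1.verts = S \ {x, y} := by rw [hP1v, hM1v, imgComplPair hx hy]
    have huv₂ : (⟨u, huT⟩ : T) ≠ ⟨v, hvT⟩ := fun h => huv (congrArg Subtype.val h)
    obtain ⟨M2, hM2, hM2v⟩ := hT.2 _ _ huv₂
    have hM2A : ¬ M2.Adj ⟨u, huT⟩ ⟨v, hvT⟩ := by
      intro h
      have := M2.edge_vert h
      rw [hM2v] at this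
      exact this (Or.inl rfl)
    obtain ⟨P2, hP2, hP2v⟩ := pushSide G huT hvT hM2 hM2A
    have hP2v' : P2.verts = T \ {u, v} := by rw [hP2v, hM2v, imgComplPair huT hvT]
    refine ⟨P1 ⊔ P2, supMatch hP1 hP2 ?_, ?_⟩
    · rw [hP1v', hP2v', Set.disjoint_left]
      rintro c ⟨hcS, -⟩ ⟨hcT, hcuv⟩
      exact hcuv (hinter ▸ ⟨hcS, hcT⟩)
    · rw [Subgraph.verts_sup, hP1v', hP2v']
      ext c
      simp only [Set.mem_union, Set.mem_diff, Set.mem_compl_iff, Set.mem_insert_iff,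
        Set.mem_singleton_iff]
      constructor
      · rintro (⟨-, hc⟩ | ⟨hcT, hcuv⟩)
        · exact hc
        · rintro (rfl | rfl)
          · have : c ∈ S ∩ T := ⟨hx, hcT⟩
            rw [hinter] at this
            exact hcuv this
          · have : c ∈ S ∩ T := ⟨hy, hcT⟩
            rw [hinter] at this
            exact hcuv this
      · intro hc
        by_cases hcS : c ∈ S
        · exact Or.inl ⟨hcS, hc⟩
        · have hcT : c ∈ T := by
            have : c ∈ S ∪ T := hcover ▸ Set.mem_univ c
            rcases this with h | h
            · exact absurd h hcS
            · exact h
          refine Or.inr ⟨hcT, ?_⟩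
          rintro (rfl | rfl)
          · exact hcS huS
          · exact hcS hvS

lemma splitSide (G : SimpleGraph V) (S T : Set V) {u v : V} (huv : u ≠ v)
    (hcover : S ∪ T = Set.univ) (hinter : S ∩ T = {u, v})
    (huS : u ∈ S) (hvS : v ∈ S) (huT : u ∈ T) (hvT : v ∈ T)
    (hS : Bicritical (G.induce S ⊔ SimpleGraph.edge (⟨u, huS⟩ : S) (⟨v, hvS⟩ : S)))
    (hT : Bicritical (G.induce T ⊔ SimpleGraph.edge (⟨u, huT⟩ : T) (⟨v, hvT⟩ : T)))
    {x y : V} (hx : x ∈ S) (hxT : x ∉ T) (hy : y ∈ T) (hyS : y ∉ S) :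
    ∃ M : G.Subgraph, M.IsMatching ∧ M.verts = ({x, y}ᶜ : Set V) := by
  have hxu : (⟨x, hx⟩ : S) ≠ ⟨u, huS⟩ := by
    intro h
    have h' : x = u := congrArg Subtype.val h
    exact hxT (by rw [h']; exact huT)
  obtain ⟨M1, hM1, hM1v⟩ := hS.2 _ _ hxu
  have hM1A : ¬ M1.Adj ⟨u, huS⟩ ⟨v, hvS⟩ := by
    intro h
    have := M1.edge_vert h
    rw [hM1v] at this
    exact this (Or.inr rfl)
  obtain ⟨P1, hP1, hP1v⟩ := pushSide G huS hvS hM1 hM1A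
  have hP1v' : P1.verts = S \ {x, u} := by rw [hP1v, hM1v, imgComplPair hx huS]
  have hyv : (⟨y, hy⟩ : T) ≠ ⟨v, hvT⟩ := by
    intro h
    have h' : y = v := congrArg Subtype.val h
    exact hyS (by rw [h']; exact hvS)
  obtain ⟨M2, hM2, hM2v⟩ := hT.2 _ _ hyv
  have hM2A : ¬ M2.Adj ⟨u, huT⟩ ⟨v, hvT⟩ := by
    intro h
    have := M2.edge_vert h.symm
    rw [hM2v] at this
    exact this (Or.inr rfl)
  obtain ⟨P2, hP2, hP2v⟩ := pushSide G huT hvT hM2 hM2A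
  have hP2v' : P2.verts = T \ {y, v} := by rw [hP2v, hM2v, imgComplPair hy hvT]
  refine ⟨P1 ⊔ P2, supMatch hP1 hP2 ?_, ?_⟩
  · rw [hP1v', hP2v', Set.disjoint_left]
    rintro c ⟨hcS, hc1⟩ ⟨hcT, hc2⟩
    simp only [Set.mem_insert_iff, Set.mem_singleton_iff] at hc1 hc2
    push_neg at hc1 hc2
    have : c ∈ S ∩ T := ⟨hcS, hcT⟩
    rw [hinter] at this
    rcases this with rfl | rfl
    · exact hc1.2 rfl
    · exact hc2.2 rfl
  · rw [Subgraph.verts_sup, hP1v', hP2v']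
    ext c
    simp only [Set.mem_union, Set.mem_diff, Set.mem_compl_iff, Set.mem_insert_iff,
      Set.mem_singleton_iff]
    constructor
    · rintro (⟨hcS, hc1⟩ | ⟨hcT, hc2⟩) (rfl | rfl)
      · exact hc1 (Or.inl rfl)
      · exact hyS hcS
      · exact hxT hcT
      · exact hc2 (Or.inl rfl)
    · rintro hc
      push_neg at hc
      by_cases hcS : c ∈ S
      · by_cases hcu : c = u
        · subst hcu
          refine Or.inr ⟨huT, ?_⟩
          rintro (rfl | rfl)
          · exact hyS hcS
          · exact huv rfl
        · refine Or.inl ⟨hcS, ?_⟩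
          rintro (rfl | rfl)
          · exact hc.1 rfl
          · exact hcu rfl
      · have hcT : c ∈ T := by
          have : c ∈ S ∪ T := hcover ▸ Set.mem_univ c
          rcases this with h | h
          · exact absurd h hcS
          · exact h
        refine Or.inr ⟨hcT, ?_⟩
        rintro (rfl | rfl)
        · exact hc.2 rfl
        · exact hcS hvS

lemma parityContra {G' : SimpleGraph V} (G : SimpleGraph V) (S T : Set V) {u v x y : V}
    {M : G'.Subgraph} (hM : M.IsMatching) (hMv : M.verts = ({x, y}ᶜ : Set V))
    (hGadj : ∀ p q, M.Adj p q → G.Adj p q)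
    (hedges : ∀ a b : V, G.Adj a b → (a ∈ S ∧ b ∈ S) ∨ (a ∈ T ∧ b ∈ T))
    (hinter : S ∩ T = {u, v}) (hnadj : ¬ G.Adj u v)
    (hvT : v ∈ T) (hxS : x ∈ S) (hyS : y ∈ S)
    (hTeven : Even (Nat.card T))
    (hux : u ≠ x) (huy : u ≠ y)
    {z₀ : V} (hz₀ : M.Adj u z₀) (hz₀T : z₀ ∈ T) (hz₀S : z₀ ∉ S)
    (hPv : ∀ z, M.Adj v z → z ∈ S) : False := by
  have hWsub : T \ {v} ⊆ M.verts := by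
    rintro w ⟨hwT, hwv⟩
    simp only [Set.mem_singleton_iff] at hwv
    rw [hMv]
    simp only [Set.mem_compl_iff, Set.mem_insert_iff, Set.mem_singleton_iff]
    push_neg
    constructor
    · rintro rfl
      have : w ∈ S ∩ T := ⟨hxS, hwT⟩
      rw [hinter] at this
      rcases this with rfl | rfl
      · exact hux rfl
      · exact hwv rfl
    · rintro rfl
      have : w ∈ S ∩ T := ⟨hyS, hwT⟩
      rw [hinter] at this
      rcases this with rfl | rfl
      · exact huy rfl
      · exact hwv rfl
  have hcl : ∀ p q, M.Adj p q → p ∈ T \ {v} → q ∈ T \ {v} := by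
    rintro p q hpq ⟨hpT, hpv⟩
    simp only [Set.mem_singleton_iff] at hpv
    have hqv : q ≠ v := by
      rintro rfl
      have hpS : p ∈ S := hPv p hpq.symm
      have : p ∈ S ∩ T := ⟨hpS, hpT⟩
      rw [hinter] at this
      rcases this with rfl | rfl
      · exact hnadj (hGadj _ _ hpq)
      · exact hpv rfl
    refine ⟨?_, hqv⟩
    by_cases hpS : p ∈ S
    · have : p ∈ S ∩ T := ⟨hpS, hpT⟩
      rw [hinter] at this
      rcases this with rfl | rfl
      · obtain ⟨c, hc, hc'⟩ := hM (M.edge_vert hz₀)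
        have h1 := hc' _ hz₀
        have h2 := hc' _ hpq
        rw [h2, ← h1]
        exact hz₀T
      · exact absurd rfl hpv
    · rcases hedges p q (hGadj _ _ hpq) with ⟨hp', -⟩ | ⟨-, hq'⟩
      · exact absurd hp' hpS
      · exact hq'
  obtain ⟨N, hN, hNv, -⟩ := restrictMatch hM _ hWsub hcl
  have heven := evenMatch hN
  rw [hNv] at heven
  have hTe : Even T.ncard := by rwa [← Nat.card_coe_set_eq]
  have hd : (T \ {v}).ncard = T.ncard - 1 := by
    rw [Set.ncard_diff (by simpa using hvT), Set.ncard_singleton]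
  have hpos : 0 < T.ncard := (Set.ncard_pos).mpr ⟨v, hvT⟩
  rw [hd] at heven
  rw [Nat.even_iff] at heven hTe
  omega

lemma minSide (G : SimpleGraph V) (S T : Set V) {u v : V} (huv : u ≠ v)
    (hnadj : ¬ G.Adj u v)
    (hcover : S ∪ T = Set.univ) (hinter : S ∩ T = {u, v})
    (huS : u ∈ S) (hvS : v ∈ S) (huT : u ∈ T) (hvT : v ∈ T)
    (hedges : ∀ a b : V, G.Adj a b → (a ∈ S ∧ b ∈ S) ∨ (a ∈ T ∧ b ∈ T))
    (hScard : 4 ≤ Nat.card S)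
    (hSmin : ∀ e ∈ (G.induce S ⊔ SimpleGraph.edge (⟨u, huS⟩ : S) (⟨v, hvS⟩ : S)).edgeSet,
      ¬ Bicritical ((G.induce S ⊔ SimpleGraph.edge (⟨u, huS⟩ : S) (⟨v, hvS⟩ : S)).deleteEdges {e}))
    (hTeven : Even (Nat.card T))
    {a b : V} (hab : G.Adj a b) (haS : a ∈ S) (hbS : b ∈ S) :
    ¬ Bicritical (G.deleteEdges {s(a, b)}) := by
  intro hBic
  set GS := G.induce S ⊔ SimpleGraph.edge (⟨u, huS⟩ : S) (⟨v, hvS⟩ : S) with hGS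
  have hab₁ : GS.Adj ⟨a, haS⟩ ⟨b, hbS⟩ := Or.inl hab
  refine hSmin s(⟨a, haS⟩, ⟨b, hbS⟩) ((SimpleGraph.mem_edgeSet GS).mpr hab₁) ⟨hScard, ?_⟩
  intro x₁ y₁ hxy₁
  have hxy : (x₁ : V) ≠ (y₁ : V) := fun h => hxy₁ (Subtype.ext h)
  obtain ⟨M, hM, hMv⟩ := hBic.2 _ _ hxy
  have hGadj : ∀ p q, M.Adj p q → G.Adj p q := fun p q h =>
    ((SimpleGraph.deleteEdges_adj).mp (M.adj_sub h)).1
  have hne : ∀ p q, M.Adj p q → s(p, q) ≠ s(a, b) := by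
    intro p q h he
    exact ((SimpleGraph.deleteEdges_adj).mp (M.adj_sub h)).2 (Set.mem_singleton_iff.mpr he)
  -- transfer an M-edge inside S to the deleted side graph
  have hDadj : ∀ (p q : V) (hp : p ∈ S) (hq : q ∈ S), M.Adj p q →
      (GS.deleteEdges {s((⟨a, haS⟩ : S), ⟨b, hbS⟩)}).Adj ⟨p, hp⟩ ⟨q, hq⟩ := by
    intro p q hp hq h
    rw [SimpleGraph.deleteEdges_adj]
    refine ⟨Or.inl (hGadj _ _ h), ?_⟩
    intro hmem
    rw [Set.mem_singleton_iff] at hmem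
    have := congrArg (Sym2.map Subtype.val) hmem
    rw [Sym2.map_pair_eq, Sym2.map_pair_eq] at this
    exact hne p q h this
  have hx1S : (x₁ : V) ∈ S := x₁.2
  have hy1S : (y₁ : V) ∈ S := y₁.2
  by_cases hPu : ∃ z, M.Adj u z ∧ z ∉ S
  · obtain ⟨z₀, hz₀, hz₀S⟩ := hPu
    have hz₀T : z₀ ∈ T := by
      rcases hedges u z₀ (hGadj _ _ hz₀) with ⟨-, h⟩ | ⟨-, h⟩
      · exact absurd h hz₀S
      · exact h
    have huM : u ∈ M.verts := M.edge_vert hz₀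
    have hux : u ≠ (x₁ : V) ∧ u ≠ (y₁ : V) := by
      rw [hMv] at huM
      simp only [Set.mem_compl_iff, Set.mem_insert_iff, Set.mem_singleton_iff] at huM
      push_neg at huM
      exact huM
    by_cases hPv : ∃ z, M.Adj v z ∧ z ∉ S
    · -- both u and v matched into T: use the uv edge on the S side
      obtain ⟨w₀, hw₀, hw₀S⟩ := hPv
      have hvM : v ∈ M.verts := M.edge_vert hw₀
      have hvx : v ≠ (x₁ : V) ∧ v ≠ (y₁ : V) := by
        rw [hMv] at hvM
        simp only [Set.mem_compl_iff, Set.mem_insert_iff, Set.mem_singleton_iff] at hvM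
        push_neg at hvM
        exact hvM
      have hWsub : (S \ {(x₁ : V), (y₁ : V)}) \ {u, v} ⊆ M.verts := by
        rintro w ⟨⟨hwS, hwxy⟩, -⟩
        rw [hMv]
        exact hwxy
      have hcl : ∀ p q, M.Adj p q → p ∈ (S \ {(x₁ : V), (y₁ : V)}) \ {u, v} →
          q ∈ (S \ {(x₁ : V), (y₁ : V)}) \ {u, v} := by
        rintro p q hpq ⟨⟨hpS, -⟩, hpuv⟩
        simp only [Set.mem_insert_iff, Set.mem_singleton_iff] at hpuv
        push_neg at hpuv
        have hqM : q ∈ M.verts := M.edge_vert hpq.symm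
        rw [hMv] at hqM
        refine ⟨⟨?_, hqM⟩, ?_⟩
        · have hpT : p ∉ T := by
            intro hpT
            have : p ∈ S ∩ T := ⟨hpS, hpT⟩
            rw [hinter] at this
            rcases this with rfl | rfl
            · exact hpuv.1 rfl
            · exact hpuv.2 rfl
          rcases hedges p q (hGadj _ _ hpq) with ⟨-, h⟩ | ⟨h, -⟩
          · exact h
          · exact absurd h hpT
        · simp only [Set.mem_insert_iff, Set.mem_singleton_iff]
          push_neg
          constructor
          · rintro rfl
            obtain ⟨c, hc, hc'⟩ := hM huM
            have := (hc' _ hpq.symm).trans (hc' _ hz₀).symm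
            rw [this] at hpS
            exact hz₀S hpS
          · rintro rfl
            obtain ⟨c, hc, hc'⟩ := hM hvM
            have := (hc' _ hpq.symm).trans (hc' _ hw₀).symm
            rw [this] at hpS
            exact hw₀S hpS
      obtain ⟨N, hN, hNv, hNe⟩ := restrictMatch hM _ hWsub hcl
      have hNsub : N.verts ⊆ S := by
        rw [hNv]
        exact Set.diff_subset.trans Set.diff_subset
      obtain ⟨P, hP, hPv⟩ := pullMatch (GS.deleteEdges {s((⟨a, haS⟩ : S), ⟨b, hbS⟩)}) hN hNsub
        (by
          intro p q hp hq h
          exact hDadj p q hp hq (hNe _ _ h).1)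
      have hPv' : P.verts = ({x₁, y₁}ᶜ : Set S) \ {⟨u, huS⟩, ⟨v, hvS⟩} := by
        rw [hPv, hNv, Set.preimage_diff, preComplPair hx1S hy1S, prePair huS hvS]
      have huvD : (GS.deleteEdges {s((⟨a, haS⟩ : S), ⟨b, hbS⟩)}).Adj ⟨u, huS⟩ ⟨v, hvS⟩ := by
        rw [SimpleGraph.deleteEdges_adj]
        constructor
        · refine Or.inr ?_
          rw [SimpleGraph.edge_adj]
          exact ⟨Or.inl ⟨rfl, rfl⟩, fun h => huv (congrArg Subtype.val h)⟩
        · intro hmem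
          rw [Set.mem_singleton_iff] at hmem
          have := congrArg (Sym2.map Subtype.val) hmem
          rw [Sym2.map_pair_eq, Sym2.map_pair_eq] at this
          rw [Sym2.eq_iff] at this
          rcases this with ⟨h1, h2⟩ | ⟨h1, h2⟩
          · exact hnadj (show G.Adj u v by
              rw [show u = a from h1, show v = b from h2]; exact hab)
          · exact hnadj (show G.Adj u v by
              rw [show u = b from h1, show v = a from h2]; exact hab.symm)
      refine ⟨P ⊔ (GS.deleteEdges {s((⟨a, haS⟩ : S), ⟨b, hbS⟩)}).subgraphOfAdj huvD,
        supMatch hP (Subgraph.IsMatching.subgraphOfAdj huvD) ?_, ?_⟩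
      · rw [hPv', subgraphOfAdj_verts, Set.disjoint_left]
        rintro c ⟨-, hc⟩ hc'
        exact hc hc'
      · rw [Subgraph.verts_sup, hPv', subgraphOfAdj_verts]
        rw [Set.diff_union_of_subset]
        rintro c (rfl | rfl)
        · simp only [Set.mem_compl_iff, Set.mem_insert_iff, Set.mem_singleton_iff]
          push_neg
          exact ⟨fun h => hux.1 (congrArg Subtype.val h), fun h => hux.2 (congrArg Subtype.val h)⟩
        · simp only [Set.mem_compl_iff, Set.mem_insert_iff, Set.mem_singleton_iff]
          push_neg
          exact ⟨fun h => hvx.1 (congrArg Subtype.val h), fun h => hvx.2 (congrArg Subtype.val h)⟩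
    · -- u matched into T, v not: parity contradiction
      exfalso
      have hPv' : ∀ z, M.Adj v z → z ∈ S := by
        intro z hz
        by_contra hns
        exact hPv ⟨z, hz, hns⟩
      exact parityContra G S T hM hMv hGadj hedges hinter hnadj hvT hx1S hy1S hTeven
        (fun h => hux.1 h) (fun h => hux.2 h) hz₀ hz₀T hz₀S hPv'
  · by_cases hPv : ∃ z, M.Adj v z ∧ z ∉ S
    · -- v matched into T, u not: parity contradiction (roles of u,v swapped)
      exfalso
      obtain ⟨z₀, hz₀, hz₀S⟩ := hPv
      have hz₀T : z₀ ∈ T := by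
        rcases hedges v z₀ (hGadj _ _ hz₀) with ⟨-, h⟩ | ⟨-, h⟩
        · exact absurd h hz₀S
        · exact h
      have hvM : v ∈ M.verts := M.edge_vert hz₀
      have hvx : v ≠ (x₁ : V) ∧ v ≠ (y₁ : V) := by
        rw [hMv] at hvM
        simp only [Set.mem_compl_iff, Set.mem_insert_iff, Set.mem_singleton_iff] at hvM
        push_neg at hvM
        exact hvM
      have hPu' : ∀ z, M.Adj u z → z ∈ S := by
        intro z hz
        by_contra hns
        exact hPu ⟨z, hz, hns⟩
      have hinter' : S ∩ T = {v, u} := by rw [hinter, Set.pair_comm]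
      exact parityContra G S T hM hMv hGadj hedges hinter' (fun h => hnadj h.symm) huT
        hx1S hy1S hTeven hvx.1 hvx.2 hz₀ hz₀T hz₀S hPu'
    · -- all matched inside S
      have hPu' : ∀ z, M.Adj u z → z ∈ S := by
        intro z hz
        by_contra hns
        exact hPu ⟨z, hz, hns⟩
      have hPv' : ∀ z, M.Adj v z → z ∈ S := by
        intro z hz
        by_contra hns
        exact hPv ⟨z, hz, hns⟩
      have hWsub : S \ {(x₁ : V), (y₁ : V)} ⊆ M.verts := by
        rintro w ⟨hwS, hwxy⟩
        rw [hMv]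
        exact hwxy
      have hcl : ∀ p q, M.Adj p q → p ∈ S \ {(x₁ : V), (y₁ : V)} →
          q ∈ S \ {(x₁ : V), (y₁ : V)} := by
        rintro p q hpq ⟨hpS, -⟩
        have hqM : q ∈ M.verts := M.edge_vert hpq.symm
        rw [hMv] at hqM
        refine ⟨?_, hqM⟩
        by_cases hpT : p ∈ T
        · have : p ∈ S ∩ T := ⟨hpS, hpT⟩
          rw [hinter] at this
          rcases this with rfl | rfl
          · exact hPu' q hpq
          · exact hPv' q hpq
        · rcases hedges p q (hGadj _ _ hpq) with ⟨-, h⟩ | ⟨h, -⟩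
          · exact h
          · exact absurd h hpT
      obtain ⟨N, hN, hNv, hNe⟩ := restrictMatch hM _ hWsub hcl
      obtain ⟨P, hP, hPv⟩ := pullMatch (GS.deleteEdges {s((⟨a, haS⟩ : S), ⟨b, hbS⟩)}) hN
        (by rw [hNv]; exact Set.diff_subset)
        (by
          intro p q hp hq h
          exact hDadj p q hp hq (hNe _ _ h).1)
      refine ⟨P, hP, ?_⟩
      rw [hPv, hNv, preComplPair hx1S hy1S]

end BicritAux

/-- If a graph `G` decomposes along a 2-vertex cut `{u, v}` (with `uv ∉ E(G)`) into two
pieces `G₁, G₂` (each with the edge `uv` added) and both pieces are minimal bicritical,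
then `G` is minimal bicritical. -/
theorem minimalBicritical_of_pieces {V : Type*} [Fintype V]
    (G : SimpleGraph V) (S1 S2 : Set V) (u v : V) (huv : u ≠ v)
    (hcut : IsTwoCut G u v) (hnadj : ¬ G.Adj u v)
    (hcover : S1 ∪ S2 = Set.univ) (hinter : S1 ∩ S2 = {u, v})
    (hu1 : u ∈ S1) (hv1 : v ∈ S1) (hu2 : u ∈ S2) (hv2 : v ∈ S2)
    (hedges : ∀ a b : V, G.Adj a b → (a ∈ S1 ∧ b ∈ S1) ∨ (a ∈ S2 ∧ b ∈ S2))
    (hconn1 : (G.induce S1).Connected) (hconn2 : (G.induce S2).Connected)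
    (hcard1 : 2 < Nat.card S1) (hcard2 : 2 < Nat.card S2)
    (h1 : MinimalBicritical (G.induce S1 ⊔ SimpleGraph.edge (⟨u, hu1⟩ : S1) (⟨v, hv1⟩ : S1)))
    (h2 : MinimalBicritical (G.induce S2 ⊔ SimpleGraph.edge (⟨u, hu2⟩ : S2) (⟨v, hv2⟩ : S2))) :
    MinimalBicritical G := by
  classical
  obtain ⟨hS1b, hS1min⟩ := h1
  obtain ⟨hS2b, hS2min⟩ := h2
  have hcover' : S2 ∪ S1 = Set.univ := by rw [Set.union_comm]; exact hcover
  have hinter' : S2 ∩ S1 = {u, v} := by rw [Set.inter_comm]; exact hinter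
  have hedges' : ∀ a b : V, G.Adj a b → (a ∈ S2 ∧ b ∈ S2) ∨ (a ∈ S1 ∧ b ∈ S1) :=
    fun a b h => (hedges a b h).symm
  have hcard : 4 ≤ Nat.card V :=
    le_trans hS1b.1 (Nat.card_le_card_of_injective _ Subtype.val_injective)
  constructor
  · refine ⟨hcard, ?_⟩
    intro x y hxy
    by_cases hx1 : x ∈ S1
    · by_cases hy1 : y ∈ S1
      · exact BicritAux.sameSide G S1 S2 huv hnadj hcover hinter hu1 hv1 hu2 hv2
          hconn2 hcard2 hS1b hS2b hx1 hy1 hxy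
      · have hy2 : y ∈ S2 := by
          have : y ∈ S1 ∪ S2 := hcover ▸ Set.mem_univ y
          exact (Set.mem_or_mem_of_mem_union this).resolve_left hy1
        by_cases hx2 : x ∈ S2
        · exact BicritAux.sameSide G S2 S1 huv hnadj hcover' hinter' hu2 hv2 hu1 hv1
            hconn1 hcard1 hS2b hS1b hx2 hy2 hxy
        · exact BicritAux.splitSide G S1 S2 huv hcover hinter hu1 hv1 hu2 hv2
            hS1b hS2b hx1 hx2 hy2 hy1
    · have hx2 : x ∈ S2 := by
        have : x ∈ S1 ∪ S2 := hcover ▸ Set.mem_univ x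
        exact (Set.mem_or_mem_of_mem_union this).resolve_left hx1
      by_cases hy2 : y ∈ S2
      · exact BicritAux.sameSide G S2 S1 huv hnadj hcover' hinter' hu2 hv2 hu1 hv1
          hconn1 hcard1 hS2b hS1b hx2 hy2 hxy
      · have hy1 : y ∈ S1 := by
          have : y ∈ S1 ∪ S2 := hcover ▸ Set.mem_univ y
          exact (Set.mem_or_mem_of_mem_union this).resolve_right hy2
        obtain ⟨M, hMm, hMv⟩ := BicritAux.splitSide G S1 S2 huv hcover hinter hu1 hv1 hu2 hv2
          hS1b hS2b hy1 hy2 hx2 hx1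
        refine ⟨M, hMm, ?_⟩
        rw [hMv, Set.pair_comm]
  · intro e he
    revert he
    refine Sym2.ind ?_ e
    intro a b he
    have hab : G.Adj a b := (SimpleGraph.mem_edgeSet G).mp he
    rcases hedges a b hab with ⟨haS, hbS⟩ | ⟨haS, hbS⟩
    · exact BicritAux.minSide G S1 S2 huv hnadj hcover hinter hu1 hv1 hu2 hv2 hedges
        hS1b.1 hS1min (BicritAux.bicritEven hS2b) hab haS hbS
    · exact BicritAux.minSide G S2 S1 huv hnadj hcover' hinter' hu2 hv2 hu1 hv1 hedges'
        hS2b.1 hS2min (BicritAux.bicritEven hS1b) hab haS hbS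
end

section
/- Let G be a minimal bicritical graph whose vertex set is covered by two sets S1 and S2 with S1 ∩ S2 = {u, v}, where {u, v} is a 2-vertex cut of G, such that every edge of G joins two vertices of S1 or two vertices of S2, and the induced subgraphs G1' = G[S1] and G2' = G[S2] are connected and have more than two vertices. For i = 1, 2, let G_i be G_i' together with the edge uv added if uv is not an edge of G_i'. Then for i = 1, 2, no edge of G_i other than uv is deletable in G_i (i.e., for every edge e of G_i with e ≠ uv, the graph G_i − e is not bicritical). -/
open SimpleGraph Set

namespace BicritAux

variable {V : Type*}

lemma exists_adj_of_connected {W : Type*} [Finite W] {H : SimpleGraph W} (h : H.Connected)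
    (hc : 1 < Nat.card W) (x : W) : ∃ y, H.Adj x y := by
  have : Nontrivial W := Finite.one_lt_card_iff_nontrivial.mp hc
  obtain ⟨y, hy⟩ := exists_ne x
  obtain ⟨p⟩ := h.preconnected x y
  exact ⟨p.getVert 1, p.adj_snd (SimpleGraph.Walk.not_nil_of_ne (Ne.symm hy))⟩

lemma val_image_compl_pair {S : Set V} (a b : ↥S) :
    Subtype.val '' ({a, b}ᶜ : Set ↥S) = S \ {(a : V), (b : V)} := by
  ext x
  constructor
  · rintro ⟨x', hx', rfl⟩
    simp only [mem_compl_iff, mem_insert_iff, mem_singleton_iff, not_or] at hx'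
    refine ⟨x'.2, ?_⟩
    simp only [mem_insert_iff, mem_singleton_iff, not_or]
    exact ⟨fun h => hx'.1 (Subtype.ext h), fun h => hx'.2 (Subtype.ext h)⟩
  · rintro ⟨hxS, hx⟩
    simp only [mem_insert_iff, mem_singleton_iff, not_or] at hx
    refine ⟨⟨x, hxS⟩, ?_, rfl⟩
    simp only [mem_compl_iff, mem_insert_iff, mem_singleton_iff, not_or]
    exact ⟨fun h => hx.1 (congrArg Subtype.val h), fun h => hx.2 (congrArg Subtype.val h)⟩

lemma side {V : Type*} [Fintype V] (G : SimpleGraph V) (S T : Set V) (u v : V) (huv : u ≠ v)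
    (hmin : MinimalBicritical G)
    (hcover : S ∪ T = Set.univ) (hinter : S ∩ T = {u, v})
    (huS : u ∈ S) (hvS : v ∈ S) (huT : u ∈ T) (hvT : v ∈ T)
    (hedges : ∀ a b : V, G.Adj a b → (a ∈ S ∧ b ∈ S) ∨ (a ∈ T ∧ b ∈ T))
    (hconnT : (G.induce T).Connected)
    (hcardS : 2 < Nat.card S) (hcardT : 2 < Nat.card T) :
    ∀ e ∈ (G.induce S ⊔ SimpleGraph.edge (⟨u, huS⟩ : S) (⟨v, hvS⟩ : S)).edgeSet,
      e ≠ s((⟨u, huS⟩ : S), (⟨v, hvS⟩ : S)) →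
      ¬ Bicritical ((G.induce S ⊔ SimpleGraph.edge (⟨u, huS⟩ : S) (⟨v, hvS⟩ : S)).deleteEdges {e}) := by
  set u' : ↥S := ⟨u, huS⟩ with hu'
  set v' : ↥S := ⟨v, hvS⟩ with hv'
  intro e he hne hB
  revert he hne hB
  induction e using Sym2.ind with
  | _ p q =>
  intro he hne hB
  -- basic facts about p q
  have hadj : (G.induce S ⊔ SimpleGraph.edge u' v').Adj p q := he
  have hpq : G.Adj (p : V) (q : V) := by
    rcases hadj with h | h
    · simpa using h
    · exfalso
      rw [SimpleGraph.edge_adj] at h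
      rcases h.1 with ⟨rfl, rfl⟩ | ⟨rfl, rfl⟩
      · exact hne rfl
      · exact hne (Sym2.eq_swap)
  have hpS : (p : V) ∈ S := p.2
  have hqS : (q : V) ∈ S := q.2
  have hne' : s((p : V), (q : V)) ≠ s(u, v) := by
    intro h
    rw [Sym2.eq_iff] at h
    apply hne
    rcases h with ⟨h1, h2⟩ | ⟨h1, h2⟩
    · rw [show p = u' from Subtype.ext h1, show q = v' from Subtype.ext h2]
    · rw [show p = v' from Subtype.ext h1, show q = u' from Subtype.ext h2]
      exact Sym2.eq_swap
  have hST : ∀ x, x ∈ S → x ∈ T → x = u ∨ x = v := by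
    intro x h1 h2
    have : x ∈ S ∩ T := ⟨h1, h2⟩
    rw [hinter] at this
    simpa using this
  have hcov : ∀ x : V, x ∈ S ∨ x ∈ T := by
    intro x
    have : x ∈ S ∪ T := by rw [hcover]; trivial
    simpa using this
  have hTsafe : ∀ x y : V, x ∈ T → y ∈ T → s(x, y) ≠ s((p : V), (q : V)) := by
    intro x y hx hy h
    rw [Sym2.eq_iff] at h
    apply hne'
    have hpT : (p : V) ∈ T ∧ (q : V) ∈ T := by
      rcases h with ⟨rfl, rfl⟩ | ⟨rfl, rfl⟩
      · exact ⟨hx, hy⟩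
      · exact ⟨hy, hx⟩
    have hp' : (p : V) = u ∨ (p : V) = v := hST _ hpS hpT.1
    have hq' : (q : V) = u ∨ (q : V) = v := hST _ hqS hpT.2
    have hpq' : (p : V) ≠ (q : V) := hpq.ne
    rcases hp' with hp1 | hp1 <;> rcases hq' with hq1 | hq1
    · exact absurd (hp1.trans hq1.symm) hpq'
    · rw [hp1, hq1]
    · rw [hp1, hq1, Sym2.eq_swap]
    · exact absurd (hp1.trans hq1.symm) hpq'
  classical
  set G' : SimpleGraph V := G.deleteEdges {s((p : V), (q : V))} with hG'
  -- restriction of a matching of G to the T side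
  have restrict : ∀ M : G.Subgraph, M.IsMatching →
      ∃ N : G'.Subgraph, N.IsMatching ∧ N.verts ⊆ M.verts ∩ T ∧
        (M.verts ∩ T) \ {u, v} ⊆ N.verts := by
    intro M hM
    refine ⟨⟨{x | x ∈ T ∧ ∃ y, y ∈ T ∧ M.Adj x y},
      fun x y => M.Adj x y ∧ x ∈ T ∧ y ∈ T, ?_, ?_, ?_⟩, ?_, ?_, ?_⟩
    · rintro x y ⟨hA, hx, hy⟩
      rw [hG', SimpleGraph.deleteEdges_adj]
      exact ⟨M.adj_sub hA, by simpa using hTsafe x y hx hy⟩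
    · rintro x y ⟨hA, hx, hy⟩
      exact ⟨hx, y, hy, hA⟩
    · refine ⟨?_⟩; rintro x y ⟨hA, hx, hy⟩
      exact ⟨hA.symm, hy, hx⟩
    · rintro x ⟨hxT, y, hyT, hA⟩
      obtain ⟨w, hw, hwu⟩ := hM (M.edge_vert hA)
      have hyw : y = w := hwu y hA
      subst hyw
      refine ⟨y, ⟨hA, hxT, hyT⟩, ?_⟩
      rintro z ⟨hz, -, -⟩
      exact hwu z hz
    · rintro x ⟨hxT, y, hyT, hA⟩
      exact ⟨M.edge_vert hA, hxT⟩
    · rintro x ⟨⟨hxM, hxT⟩, hxuv⟩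
      refine ⟨hxT, ?_⟩
      obtain ⟨y, hy, -⟩ := hM hxM
      rcases hedges x y (M.adj_sub hy) with ⟨hxS, -⟩ | ⟨-, hyT⟩
      · exact absurd (by simpa using hST x hxS hxT) hxuv
      · exact ⟨y, hyT, hy⟩
  have evencard : ∀ {H : SimpleGraph V} (N : H.Subgraph), N.IsMatching → Even N.verts.ncard := by
    intro H N hN
    have : Fintype N.verts := Fintype.ofFinite _
    rw [Set.ncard_eq_toFinset_card']
    exact hN.even_card
  have hpairT : ({u, v} : Set V) ⊆ T := by
    rintro x (rfl | rfl)
    exacts [huT, hvT]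
  have hevenT : Even T.ncard := by
    obtain ⟨M, hM, hMv⟩ := hmin.1.2 u v huv
    obtain ⟨N, hN, hsub1, hsub2⟩ := restrict M hM
    have hMT : M.verts ∩ T = T \ {u, v} := by
      rw [hMv]; ext x; simp only [mem_inter_iff, mem_compl_iff, mem_diff]; tauto
    have hNv : N.verts = T \ {u, v} := by
      refine subset_antisymm (hMT ▸ hsub1) fun x hx => hsub2 ?_
      rw [hMT]
      exact ⟨hx, hx.2⟩
    have h1 : Even (T \ {u, v}).ncard := hNv ▸ evencard N hN
    have h2 : (T \ {u, v}).ncard + 2 = T.ncard := by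
      rw [← Set.ncard_pair huv]
      exact Set.ncard_diff_add_ncard_of_subset hpairT
    rw [← h2]
    exact h1.add (by decide)
  -- T-side matchings covering T minus {c, w} with c ∈ {u,v}
  have MTpair : ∀ c w : V, c ∈ ({u, v} : Set V) → w ∈ T → w ≠ c →
      ∃ N : G'.Subgraph, N.IsMatching ∧ N.verts = T \ {c, w} := by
    intro c w hc hwT hwc
    have hcT : c ∈ T := hpairT hc
    obtain ⟨M, hM, hMv⟩ := hmin.1.2 c w (Ne.symm hwc)
    obtain ⟨N, hN, hsub1, hsub2⟩ := restrict M hM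
    have hMT : M.verts ∩ T = T \ {c, w} := by
      rw [hMv]; ext x; simp only [mem_inter_iff, mem_compl_iff, mem_diff]; tauto
    rw [hMT] at hsub1 hsub2
    refine ⟨N, hN, subset_antisymm hsub1 ?_⟩
    have hXsub : (T \ {c, w}) \ N.verts ⊆ ({u, v} : Set V) \ {c} := by
      intro x hx
      refine ⟨?_, fun h => hx.1.2 (by simp only [mem_singleton_iff] at h; simp [h])⟩
      by_contra hxc
      exact hx.2 (hsub2 ⟨hx.1, hxc⟩)
    have hsingle : ∃ d, ({u, v} : Set V) \ {c} ⊆ {d} := by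
      rcases hc with rfl | rfl
      · refine ⟨v, fun x hx => ?_⟩
        rcases hx with ⟨(rfl | rfl), hne2⟩
        · exact absurd rfl hne2
        · rfl
      · refine ⟨u, fun x hx => ?_⟩
        rcases hx with ⟨(rfl | rfl), hne2⟩
        · rfl
        · exact absurd rfl hne2
    obtain ⟨d, hd⟩ := hsingle
    have hcard1 : ((T \ {c, w}) \ N.verts).ncard ≤ 1 := by
      have := Set.ncard_le_ncard (hXsub.trans hd) (Set.toFinite _)
      simpa using this
    have hA : (T \ {c, w}).ncard + 2 = T.ncard := by
      rw [← Set.ncard_pair (Ne.symm hwc)]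
      refine Set.ncard_diff_add_ncard_of_subset ?_
      rintro x (rfl | rfl)
      exacts [hcT, hwT]
    have hAeven : Even (T \ {c, w}).ncard := by
      rcases hevenT with ⟨k, hk⟩
      exact ⟨k - 1, by omega⟩
    have hXcard : ((T \ {c, w}) \ N.verts).ncard = (T \ {c, w}).ncard - N.verts.ncard :=
      Set.ncard_diff hsub1 (Set.toFinite _)
    have hNeven : Even N.verts.ncard := evencard N hN
    have hNle : N.verts.ncard ≤ (T \ {c, w}).ncard := Set.ncard_le_ncard hsub1 (Set.toFinite _)
    have hzero : ((T \ {c, w}) \ N.verts).ncard = 0 := by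
      rcases hAeven with ⟨k1, e1⟩
      rcases hNeven with ⟨k2, e2⟩
      omega
    have hempty : (T \ {c, w}) \ N.verts = ∅ :=
      (Set.ncard_eq_zero (Set.toFinite _)).mp hzero
    intro x hx
    by_contra hxN
    have : x ∈ (T \ {c, w}) \ N.verts := ⟨hx, hxN⟩
    rw [hempty] at this
    exact this
  -- T-side full matching
  have MTfull : ∃ N : G'.Subgraph, N.IsMatching ∧ N.verts = T := by
    obtain ⟨w', hw'⟩ := exists_adj_of_connected hconnT (by omega) (⟨u, huT⟩ : ↥T)
    have hGuw : G.Adj u ↑w' := by simpa using hw'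
    have hwT : (w' : V) ∈ T := w'.2
    have hwu : (w' : V) ≠ u := fun h => hGuw.ne h.symm
    obtain ⟨N0, hN0, hN0v⟩ := MTpair u ↑w' (by simp) hwT hwu
    have hG'uw : G'.Adj u ↑w' := by
      rw [hG', SimpleGraph.deleteEdges_adj]
      exact ⟨hGuw, by simpa using hTsafe u ↑w' huT hwT⟩
    refine ⟨N0 ⊔ G'.subgraphOfAdj hG'uw, ?_, ?_⟩
    · refine hN0.sup (SimpleGraph.Subgraph.IsMatching.subgraphOfAdj _) ?_
      rw [hN0.support_eq_verts,
        (SimpleGraph.Subgraph.IsMatching.subgraphOfAdj hG'uw).support_eq_verts, hN0v,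
        SimpleGraph.subgraphOfAdj_verts, Set.disjoint_left]
      rintro x ⟨-, hxn⟩ hx2
      exact hxn hx2
    · rw [SimpleGraph.Subgraph.verts_sup, hN0v, SimpleGraph.subgraphOfAdj_verts]
      ext x
      simp only [mem_union, mem_diff, mem_insert_iff, mem_singleton_iff]
      constructor
      · rintro (⟨h, -⟩ | (rfl | rfl))
        exacts [h, huT, hwT]
      · intro hxT
        by_cases hx : x = u ∨ x = (w' : V)
        · exact Or.inr hx
        · push_neg at hx
          exact Or.inl ⟨hxT, not_or.mpr hx⟩
  -- the S-side piece graph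
  set B : SimpleGraph ↥S := (G.induce S ⊔ SimpleGraph.edge u' v').deleteEdges {s(p, q)} with hBdef
  have hBadj : ∀ x y : ↥S, B.Adj x y → s(x, y) ≠ s(u', v') →
      G.Adj (x : V) (y : V) ∧ s((x : V), (y : V)) ≠ s((p : V), (q : V)) := by
    intro x y hA hnuv
    rw [hBdef, SimpleGraph.deleteEdges_adj] at hA
    obtain ⟨h2, h3⟩ := hA
    simp only [Set.mem_singleton_iff] at h3
    constructor
    · rcases h2 with h2 | h2
      · simpa using h2
      · rw [SimpleGraph.edge_adj] at h2
        exfalso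
        apply hnuv
        rcases h2.1 with ⟨rfl, rfl⟩ | ⟨rfl, rfl⟩
        · rfl
        · exact Sym2.eq_swap
    · intro hxy
      apply h3
      rw [Sym2.eq_iff] at hxy ⊢
      rcases hxy with ⟨h4, h5⟩ | ⟨h4, h5⟩
      · exact Or.inl ⟨Subtype.ext h4, Subtype.ext h5⟩
      · exact Or.inr ⟨Subtype.ext h4, Subtype.ext h5⟩
  -- converting a matching of B that does not use the marker edge
  have conv0 : ∀ M' : B.Subgraph, M'.IsMatching → ¬ M'.Adj u' v' →
      ∃ N : G'.Subgraph, N.IsMatching ∧ N.verts = Subtype.val '' M'.verts := by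
    intro M' hM' hfake
    have key : ∀ x y : ↥S, M'.Adj x y →
        G.Adj (x : V) (y : V) ∧ s((x : V), (y : V)) ≠ s((p : V), (q : V)) := by
      intro x y hA
      refine hBadj x y (M'.adj_sub hA) ?_
      intro hxy
      rw [Sym2.eq_iff] at hxy
      rcases hxy with ⟨rfl, rfl⟩ | ⟨rfl, rfl⟩
      · exact hfake hA
      · exact hfake hA.symm
    refine ⟨⟨Subtype.val '' M'.verts,
      fun x y => ∃ (hx : x ∈ S) (hy : y ∈ S), M'.Adj ⟨x, hx⟩ ⟨y, hy⟩, ?_, ?_, ?_⟩, ?_, rfl⟩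
    · rintro x y ⟨hx, hy, hA⟩
      rw [hG', SimpleGraph.deleteEdges_adj]
      obtain ⟨h1, h2⟩ := key _ _ hA
      exact ⟨h1, by simpa using h2⟩
    · rintro x y ⟨hx, hy, hA⟩
      exact ⟨⟨x, hx⟩, M'.edge_vert hA, rfl⟩
    · refine ⟨?_⟩; rintro x y ⟨hx, hy, hA⟩
      exact ⟨hy, hx, hA.symm⟩
    · rintro x ⟨x', hx', rfl⟩
      obtain ⟨y', hy', hyu⟩ := hM' hx'
      refine ⟨↑y', ⟨x'.2, y'.2, hy'⟩, ?_⟩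
      rintro z ⟨hz1, hz2, hA⟩
      exact congrArg Subtype.val (hyu ⟨z, hz2⟩ hA)
  -- converting an arbitrary matching of B
  have convB : ∀ M' : B.Subgraph, M'.IsMatching →
      ∃ N : G'.Subgraph, N.IsMatching ∧ (N.verts = Subtype.val '' M'.verts ∨
        (u' ∈ M'.verts ∧ v' ∈ M'.verts ∧ N.verts = Subtype.val '' M'.verts \ {u, v})) := by
    intro M' hM'
    by_cases hf : M'.Adj u' v'
    · have hud : ∀ x : ↥S, M'.Adj u' x → x = v' := by
        intro x hx
        obtain ⟨y, hy, hyu⟩ := hM' (M'.edge_vert hf)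
        rw [hyu x hx, ← hyu v' hf]
      have hvd : ∀ x : ↥S, M'.Adj v' x → x = u' := by
        intro x hx
        obtain ⟨y, hy, hyu⟩ := hM' (M'.edge_vert hf.symm)
        rw [hyu x hx, ← hyu u' hf.symm]
      have hM''m : (M'.deleteVerts {u', v'}).IsMatching := by
        intro x hx
        obtain ⟨hx1, hx2⟩ := hx
        obtain ⟨y, hy, hyu⟩ := hM' hx1
        have hyn : y ∉ ({u', v'} : Set ↥S) := by
          rintro (rfl | rfl)
          · exact hx2 (by rw [hud x hy.symm]; simp)
          · exact hx2 (by rw [hvd x hy.symm]; simp)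
        refine ⟨y, ?_, ?_⟩
        · exact SimpleGraph.Subgraph.deleteVerts_adj.mpr ⟨hx1, hx2, M'.edge_vert hy.symm, hyn, hy⟩
        · intro z hz
          exact hyu z (SimpleGraph.Subgraph.deleteVerts_adj.mp hz).2.2.2.2
      have hnofake : ¬ (M'.deleteVerts {u', v'}).Adj u' v' := by
        intro hA
        exact (SimpleGraph.Subgraph.deleteVerts_adj.mp hA).2.1 (by simp)
      obtain ⟨N, hN, hNv⟩ := conv0 _ hM''m hnofake
      refine ⟨N, hN, Or.inr ⟨M'.edge_vert hf, M'.edge_vert hf.symm, ?_⟩⟩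
      rw [hNv, SimpleGraph.Subgraph.deleteVerts_verts, Set.image_diff Subtype.val_injective]
      congr 1
      rw [Set.image_insert_eq, Set.image_singleton]
    · obtain ⟨N, hN, hNv⟩ := conv0 M' hM' hf
      exact ⟨N, hN, Or.inl hNv⟩
  -- S-side matchings
  have MSpair : ∀ a b : V, ∀ ha : a ∈ S, ∀ hb : b ∈ S, a ≠ b →
      ∃ N : G'.Subgraph, N.IsMatching ∧ (N.verts = S \ {a, b} ∨
        (u ≠ a ∧ u ≠ b ∧ v ≠ a ∧ v ≠ b ∧ N.verts = (S \ {a, b}) \ {u, v})) := by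
    intro a b ha hb hab
    obtain ⟨M', hM', hMv⟩ := hB.2 ⟨a, ha⟩ ⟨b, hb⟩ (fun h => hab (congrArg Subtype.val h))
    obtain ⟨N, hN, hNv | ⟨hu1, hv1, hNv⟩⟩ := convB M' hM'
    · exact ⟨N, hN, Or.inl (by rw [hNv, hMv, val_image_compl_pair])⟩
    · rw [hMv] at hu1 hv1
      simp only [mem_compl_iff, mem_insert_iff, mem_singleton_iff, not_or] at hu1 hv1
      exact ⟨N, hN, Or.inr ⟨fun h => hu1.1 (Subtype.ext h), fun h => hu1.2 (Subtype.ext h),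
        fun h => hv1.1 (Subtype.ext h), fun h => hv1.2 (Subtype.ext h),
        by rw [hNv, hMv, val_image_compl_pair]⟩⟩
  have MSuv : ∃ N : G'.Subgraph, N.IsMatching ∧ N.verts = S \ {u, v} := by
    obtain ⟨N, hN, h | h⟩ := MSpair u v huS hvS huv
    · exact ⟨N, hN, h⟩
    · exact absurd rfl h.1
  have MSfull : ∃ N : G'.Subgraph, N.IsMatching ∧ N.verts = S := by
    have hz : ∃ z, z ∈ S ∧ z ≠ u ∧ z ≠ v := by
      by_contra hcon
      push_neg at hcon
      have hsub : S ⊆ {u, v} := by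
        intro x hx
        by_cases h1 : x = u
        · exact Or.inl h1
        · exact Or.inr (hcon x hx h1)
      have hle := Set.ncard_le_ncard hsub (Set.toFinite _)
      rw [Set.ncard_pair huv] at hle
      rw [Nat.card_coe_set_eq] at hcardS
      omega
    obtain ⟨z, hzS, hzu, hzv⟩ := hz
    obtain ⟨M1, hM1, hM1v⟩ := hB.2 v' ⟨z, hzS⟩ (fun h => hzv (congrArg Subtype.val h).symm)
    have hu'm : u' ∈ M1.verts := by
      rw [hM1v]
      simp only [mem_compl_iff, mem_insert_iff, mem_singleton_iff, not_or]
      exact ⟨fun h => huv (congrArg Subtype.val h), fun h => hzu (congrArg Subtype.val h).symm⟩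
    obtain ⟨w', hw', -⟩ := hM1 hu'm
    have hBuw : B.Adj u' w' := M1.adj_sub hw'
    have hw'mem : w' ∈ M1.verts := M1.edge_vert hw'.symm
    have hw'v : w' ≠ v' := by
      rw [hM1v] at hw'mem
      simp only [mem_compl_iff, mem_insert_iff, mem_singleton_iff, not_or] at hw'mem
      exact hw'mem.1
    have hw'u : w' ≠ u' := hBuw.ne'
    have hGuw : G.Adj u (w' : V) ∧ s(u, (w' : V)) ≠ s((p : V), (q : V)) := by
      refine hBadj u' w' hBuw ?_
      intro h
      rw [Sym2.eq_iff] at h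
      rcases h with ⟨-, h5⟩ | ⟨h4, h5⟩
      · exact hw'v h5
      · exact huv (congrArg Subtype.val h4)
    obtain ⟨M2, hM2, hM2v⟩ := hB.2 u' w' (Ne.symm hw'u)
    have hnofake : ¬ M2.Adj u' v' := by
      intro h
      have := M2.edge_vert h
      rw [hM2v] at this
      simp at this
    obtain ⟨N0, hN0, hN0v⟩ := conv0 M2 hM2 hnofake
    rw [hM2v, val_image_compl_pair] at hN0v
    have hG'uw : G'.Adj u (w' : V) := by
      rw [hG', SimpleGraph.deleteEdges_adj]
      exact ⟨hGuw.1, by simpa using hGuw.2⟩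
    refine ⟨N0 ⊔ G'.subgraphOfAdj hG'uw,
      hN0.sup (SimpleGraph.Subgraph.IsMatching.subgraphOfAdj _) ?_, ?_⟩
    · rw [hN0.support_eq_verts,
        (SimpleGraph.Subgraph.IsMatching.subgraphOfAdj hG'uw).support_eq_verts, hN0v,
        SimpleGraph.subgraphOfAdj_verts, Set.disjoint_left]
      rintro x ⟨-, hxn⟩ hx2
      exact hxn hx2
    · rw [SimpleGraph.Subgraph.verts_sup, hN0v, SimpleGraph.subgraphOfAdj_verts]
      ext x
      simp only [mem_union, mem_diff, mem_insert_iff, mem_singleton_iff]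
      constructor
      · rintro (⟨h, -⟩ | (rfl | rfl))
        exacts [h, huS, w'.2]
      · intro hxS
        by_cases hx : x = u ∨ x = (w' : V)
        · exact Or.inr hx
        · push_neg at hx
          exact Or.inl ⟨hxS, not_or.mpr hx⟩
  -- gluing disjoint matchings
  have glue : ∀ N1 N2 : G'.Subgraph, N1.IsMatching → N2.IsMatching →
      Disjoint N1.verts N2.verts →
      ∃ N : G'.Subgraph, N.IsMatching ∧ N.verts = N1.verts ∪ N2.verts := by
    intro N1 N2 h1 h2 hd
    exact ⟨N1 ⊔ N2, h1.sup h2 (by rwa [h1.support_eq_verts, h2.support_eq_verts]),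
      by rw [SimpleGraph.Subgraph.verts_sup]⟩
  -- the mixed case: one deleted vertex on each side
  have mixed : ∀ a b : V, a ∈ S → b ∉ S → a ≠ b →
      ∃ N : G'.Subgraph, N.IsMatching ∧ N.verts = ({a, b}ᶜ : Set V) := by
    intro a b haS hbS hab
    have hbT : b ∈ T := (hcov b).resolve_left hbS
    have hbu : b ≠ u := fun h => hbS (h ▸ huS)
    have hbv : b ≠ v := fun h => hbS (h ▸ hvS)
    by_cases hau : a = u
    · subst hau
      obtain ⟨N1, hN1, hN1v⟩ := MSuv
      obtain ⟨N2, hN2, hN2v⟩ := MTpair a b (by simp) hbT hbu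
      have hdisj : Disjoint N1.verts N2.verts := by
        rw [hN1v, hN2v, Set.disjoint_left]
        rintro x ⟨hxS, hxn⟩ ⟨hxT, -⟩
        exact hxn (by simpa using hST x hxS hxT)
      obtain ⟨N, hN, hNv⟩ := glue N1 N2 hN1 hN2 hdisj
      refine ⟨N, hN, ?_⟩
      rw [hNv, hN1v, hN2v]
      ext x
      simp only [mem_union, mem_diff, mem_insert_iff, mem_singleton_iff, mem_compl_iff, not_or]
      constructor
      · rintro (⟨hxS, hxn⟩ | ⟨hxT, hxn⟩)
        · exact ⟨hxn.1, fun h => hbS (h ▸ hxS)⟩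
        · exact hxn
      · rintro ⟨hxu, hxb⟩
        by_cases hxS' : x ∈ S
        · by_cases hxv : x = v
          · subst hxv
            exact Or.inr ⟨hvT, hxu, hxb⟩
          · exact Or.inl ⟨hxS', hxu, hxv⟩
        · exact Or.inr ⟨(hcov x).resolve_left hxS', hxu, hxb⟩
    · by_cases hav : a = v
      · subst hav
        obtain ⟨N1, hN1, hN1v⟩ := MSuv
        obtain ⟨N2, hN2, hN2v⟩ := MTpair a b (by simp) hbT hbv
        have hdisj : Disjoint N1.verts N2.verts := by
          rw [hN1v, hN2v, Set.disjoint_left]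
          rintro x ⟨hxS, hxn⟩ ⟨hxT, -⟩
          exact hxn (by simpa using hST x hxS hxT)
        obtain ⟨N, hN, hNv⟩ := glue N1 N2 hN1 hN2 hdisj
        refine ⟨N, hN, ?_⟩
        rw [hNv, hN1v, hN2v]
        ext x
        simp only [mem_union, mem_diff, mem_insert_iff, mem_singleton_iff, mem_compl_iff,
          not_or]
        constructor
        · rintro (⟨hxS, hxn⟩ | ⟨hxT, hxn⟩)
          · exact ⟨hxn.2, fun h => hbS (h ▸ hxS)⟩
          · exact hxn
        · rintro ⟨hxv, hxb⟩
          by_cases hxS' : x ∈ S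
          · by_cases hxu : x = u
            · subst hxu
              exact Or.inr ⟨huT, hxv, hxb⟩
            · exact Or.inl ⟨hxS', hxu, hxv⟩
          · exact Or.inr ⟨(hcov x).resolve_left hxS', hxv, hxb⟩
      · -- a ∈ S \ {u, v}
        have haT : a ∉ T := by
          intro h
          rcases hST a haS h with rfl | rfl
          · exact hau rfl
          · exact hav rfl
        obtain ⟨M, hM, hMv⟩ := hmin.1.2 a b hab
        obtain ⟨N, hN, hsub1, hsub2⟩ := restrict M hM
        have hMT : M.verts ∩ T = T \ {b} := by
          rw [hMv]
          ext x
          simp only [mem_inter_iff, mem_compl_iff, mem_diff, mem_insert_iff, mem_singleton_iff,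
            not_or]
          constructor
          · rintro ⟨⟨-, h2⟩, h3⟩
            exact ⟨h3, h2⟩
          · rintro ⟨h1, h2⟩
            exact ⟨⟨fun h => haT (h ▸ h1), h2⟩, h1⟩
        rw [hMT] at hsub1 hsub2
        have hXsub : (T \ {b}) \ N.verts ⊆ ({u, v} : Set V) := by
          intro x hx
          by_contra hxuv
          exact hx.2 (hsub2 ⟨hx.1, hxuv⟩)
        have hcardodd : ¬ Even (T \ {b}).ncard := by
          have hbsub : ({b} : Set V) ⊆ T := by simp [hbT]
          have hplus : (T \ {b}).ncard + 1 = T.ncard := by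
            rw [← Set.ncard_singleton b]
            exact Set.ncard_diff_add_ncard_of_subset hbsub
          rcases hevenT with ⟨k, hk⟩
          rintro ⟨m, hm⟩
          omega
        have hXcard : ((T \ {b}) \ N.verts).ncard = (T \ {b}).ncard - N.verts.ncard :=
          Set.ncard_diff hsub1 (Set.toFinite _)
        have hNeven := evencard N hN
        have hNle : N.verts.ncard ≤ (T \ {b}).ncard := Set.ncard_le_ncard hsub1 (Set.toFinite _)
        have hXodd : ¬ Even ((T \ {b}) \ N.verts).ncard := by
          rcases hNeven with ⟨k, hk⟩
          rintro ⟨m, hm⟩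
          exact hcardodd ⟨m + k, by omega⟩
        have hNdd : N.verts = (T \ {b}) \ ((T \ {b}) \ N.verts) :=
          (Set.diff_diff_cancel_left hsub1).symm
        rcases Set.subset_pair_iff_eq.mp hXsub with hX | hX | hX | hX
        · rw [hX] at hXodd
          simp at hXodd
        · -- X = {u} : u is matched on the S side, v on the T side
          rw [hX] at hNdd
          obtain ⟨N1, hN1, hN1v | ⟨-, -, -, h4, -⟩⟩ := MSpair a v haS hvS hav
          · have hdisj : Disjoint N1.verts N.verts := by
              rw [hN1v, hNdd, Set.disjoint_left]
              rintro x ⟨hxS, hxn⟩ ⟨⟨hxT, -⟩, hxu⟩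
              rcases hST x hxS hxT with rfl | rfl
              · exact hxu rfl
              · exact hxn (by simp)
            obtain ⟨NN, hNN, hNNv⟩ := glue N1 N hN1 hN hdisj
            refine ⟨NN, hNN, ?_⟩
            rw [hNNv, hN1v, hNdd]
            ext x
            simp only [mem_union, mem_diff, mem_insert_iff, mem_singleton_iff, mem_compl_iff,
              not_or]
            constructor
            · rintro (⟨hxS, hxn⟩ | ⟨⟨hxT, hxb⟩, -⟩)
              · exact ⟨hxn.1, fun h => hbS (h ▸ hxS)⟩
              · exact ⟨fun h => haT (h ▸ hxT), hxb⟩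
            · rintro ⟨hxa, hxb⟩
              by_cases hxS' : x ∈ S
              · by_cases hxv : x = v
                · subst hxv
                  exact Or.inr ⟨⟨hvT, hxb⟩, fun h => huv h.symm⟩
                · exact Or.inl ⟨hxS', hxa, hxv⟩
              · have hxT := (hcov x).resolve_left hxS'
                exact Or.inr ⟨⟨hxT, hxb⟩, fun h => hxS' (h ▸ huS)⟩
          · exact absurd rfl h4
        · -- X = {v} : v is matched on the S side, u on the T side
          rw [hX] at hNdd
          obtain ⟨N1, hN1, hN1v | ⟨-, h2, -, -, -⟩⟩ := MSpair a u haS huS hau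
          · have hdisj : Disjoint N1.verts N.verts := by
              rw [hN1v, hNdd, Set.disjoint_left]
              rintro x ⟨hxS, hxn⟩ ⟨⟨hxT, -⟩, hxv⟩
              rcases hST x hxS hxT with rfl | rfl
              · exact hxn (by simp)
              · exact hxv rfl
            obtain ⟨NN, hNN, hNNv⟩ := glue N1 N hN1 hN hdisj
            refine ⟨NN, hNN, ?_⟩
            rw [hNNv, hN1v, hNdd]
            ext x
            simp only [mem_union, mem_diff, mem_insert_iff, mem_singleton_iff, mem_compl_iff,
              not_or]
            constructor
            · rintro (⟨hxS, hxn⟩ | ⟨⟨hxT, hxb⟩, -⟩)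
              · exact ⟨hxn.1, fun h => hbS (h ▸ hxS)⟩
              · exact ⟨fun h => haT (h ▸ hxT), hxb⟩
            · rintro ⟨hxa, hxb⟩
              by_cases hxS' : x ∈ S
              · by_cases hxu : x = u
                · subst hxu
                  exact Or.inr ⟨⟨huT, hxb⟩, huv⟩
                · exact Or.inl ⟨hxS', hxa, hxu⟩
              · have hxT := (hcov x).resolve_left hxS'
                exact Or.inr ⟨⟨hxT, hxb⟩, fun h => hxS' (h ▸ hvS)⟩
          · exact absurd rfl h2
        · rw [hX] at hXodd
          rw [Set.ncard_pair huv] at hXodd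
          exact (hXodd (by decide)).elim
  -- G minus the edge pq is bicritical, contradicting minimality of G
  refine hmin.2 s((p : V), (q : V)) ((SimpleGraph.mem_edgeSet _).mpr hpq) ?_
  have hmain : ∀ a b : V, a ≠ b →
      ∃ N : G'.Subgraph, N.IsMatching ∧ N.verts = ({a, b}ᶜ : Set V) := by
    intro a b hab
    by_cases haS : a ∈ S <;> by_cases hbS : b ∈ S
    · -- both deleted vertices in S
      obtain ⟨N1, hN1, hN1v | ⟨h1, h2, h3, h4, hN1v⟩⟩ := MSpair a b haS hbS hab
      · obtain ⟨N2, hN2, hN2v⟩ := MTpair u v (by simp) hvT (Ne.symm huv)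
        have hdisj : Disjoint N1.verts N2.verts := by
          rw [hN1v, hN2v, Set.disjoint_left]
          rintro x ⟨hxS, -⟩ ⟨hxT, hxn⟩
          exact hxn (by simpa using hST x hxS hxT)
        obtain ⟨N, hN, hNv⟩ := glue N1 N2 hN1 hN2 hdisj
        refine ⟨N, hN, ?_⟩
        rw [hNv, hN1v, hN2v]
        ext x
        simp only [mem_union, mem_diff, mem_insert_iff, mem_singleton_iff, mem_compl_iff, not_or]
        constructor
        · rintro (⟨hxS, hxn⟩ | ⟨hxT, hxn⟩)
          · exact hxn
          · have hxuv : x ∉ ({u, v} : Set V) := by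
              rintro (rfl | rfl)
              · exact hxn.1 rfl
              · exact hxn.2 rfl
            constructor
            · rintro rfl
              exact hxuv (by simpa using hST x haS hxT)
            · rintro rfl
              exact hxuv (by simpa using hST x hbS hxT)
        · rintro ⟨hxa, hxb⟩
          by_cases hxS' : x ∈ S
          · exact Or.inl ⟨hxS', hxa, hxb⟩
          · exact Or.inr ⟨(hcov x).resolve_left hxS', fun h => hxS' (h ▸ huS),
              fun h => hxS' (h ▸ hvS)⟩
      · obtain ⟨N2, hN2, hN2v⟩ := MTfull
        have hdisj : Disjoint N1.verts N2.verts := by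
          rw [hN1v, hN2v, Set.disjoint_left]
          rintro x ⟨⟨hxS, -⟩, hxn⟩ hxT
          exact hxn (by simpa using hST x hxS hxT)
        obtain ⟨N, hN, hNv⟩ := glue N1 N2 hN1 hN2 hdisj
        refine ⟨N, hN, ?_⟩
        rw [hNv, hN1v, hN2v]
        ext x
        simp only [mem_union, mem_diff, mem_insert_iff, mem_singleton_iff, mem_compl_iff, not_or]
        constructor
        · rintro (⟨⟨hxS, hxn⟩, -⟩ | hxT)
          · exact hxn
          · constructor
            · rintro rfl
              rcases hST x haS hxT with rfl | rfl
              · exact h1 rfl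
              · exact h3 rfl
            · rintro rfl
              rcases hST x hbS hxT with rfl | rfl
              · exact h2 rfl
              · exact h4 rfl
        · rintro ⟨hxa, hxb⟩
          by_cases hxT' : x ∈ T
          · exact Or.inr hxT'
          · have hxS' : x ∈ S := (hcov x).resolve_right hxT'
            exact Or.inl ⟨⟨hxS', hxa, hxb⟩, fun h => hxT' (h ▸ huT), fun h => hxT' (h ▸ hvT)⟩
    · exact mixed a b haS hbS hab
    · obtain ⟨N, hN, hNv⟩ := mixed b a hbS haS (Ne.symm hab)
      exact ⟨N, hN, by rw [hNv, Set.pair_comm]⟩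
    · -- both deleted vertices outside S
      have haT : a ∈ T := (hcov a).resolve_left haS
      have hbT : b ∈ T := (hcov b).resolve_left hbS
      obtain ⟨M, hM, hMv⟩ := hmin.1.2 a b hab
      obtain ⟨N, hN, hsub1, hsub2⟩ := restrict M hM
      have hMT : M.verts ∩ T = T \ {a, b} := by
        rw [hMv]
        ext x
        simp only [mem_inter_iff, mem_compl_iff, mem_diff, mem_insert_iff, mem_singleton_iff,
          not_or]
        tauto
      rw [hMT] at hsub1 hsub2
      have hXsub : (T \ {a, b}) \ N.verts ⊆ ({u, v} : Set V) := by
        intro x hx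
        by_contra hxuv
        exact hx.2 (hsub2 ⟨hx.1, hxuv⟩)
      have hAeven : Even (T \ {a, b}).ncard := by
        have hpair : ({a, b} : Set V) ⊆ T := by
          rintro x (rfl | rfl)
          exacts [haT, hbT]
        have hplus : (T \ {a, b}).ncard + 2 = T.ncard := by
          rw [← Set.ncard_pair hab]
          exact Set.ncard_diff_add_ncard_of_subset hpair
        rcases hevenT with ⟨k, hk⟩
        exact ⟨k - 1, by omega⟩
      have hXcard : ((T \ {a, b}) \ N.verts).ncard = (T \ {a, b}).ncard - N.verts.ncard :=
        Set.ncard_diff hsub1 (Set.toFinite _)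
      have hNle := Set.ncard_le_ncard hsub1 (Set.toFinite _)
      have hXeven : Even ((T \ {a, b}) \ N.verts).ncard := by
        rcases hAeven with ⟨k, hk⟩
        rcases evencard N hN with ⟨m, hm⟩
        exact ⟨k - m, by omega⟩
      have hNdd : N.verts = (T \ {a, b}) \ ((T \ {a, b}) \ N.verts) :=
        (Set.diff_diff_cancel_left hsub1).symm
      rcases Set.subset_pair_iff_eq.mp hXsub with hX | hX | hX | hX
      · -- u and v are both matched on the T side
        rw [hX, Set.diff_empty] at hNdd
        obtain ⟨N1, hN1, hN1v⟩ := MSuv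
        have hdisj : Disjoint N1.verts N.verts := by
          rw [hN1v, hNdd, Set.disjoint_left]
          rintro x ⟨hxS, hxn⟩ ⟨hxT, -⟩
          exact hxn (by simpa using hST x hxS hxT)
        obtain ⟨NN, hNN, hNNv⟩ := glue N1 N hN1 hN hdisj
        refine ⟨NN, hNN, ?_⟩
        rw [hNNv, hN1v, hNdd]
        ext x
        simp only [mem_union, mem_diff, mem_insert_iff, mem_singleton_iff, mem_compl_iff, not_or]
        constructor
        · rintro (⟨hxS, -⟩ | ⟨-, hxn⟩)
          · exact ⟨fun h => haS (h ▸ hxS), fun h => hbS (h ▸ hxS)⟩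
          · exact hxn
        · rintro ⟨hxa, hxb⟩
          by_cases hxT' : x ∈ T
          · exact Or.inr ⟨hxT', hxa, hxb⟩
          · have hxS' : x ∈ S := (hcov x).resolve_right hxT'
            exact Or.inl ⟨hxS', fun h => hxT' (h ▸ huT), fun h => hxT' (h ▸ hvT)⟩
      · rw [hX, Set.ncard_singleton] at hXeven
        simp at hXeven
      · rw [hX, Set.ncard_singleton] at hXeven
        simp at hXeven
      · -- u and v are both matched on the S side
        rw [hX] at hNdd
        obtain ⟨N1, hN1, hN1v⟩ := MSfull
        have hdisj : Disjoint N1.verts N.verts := by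
          rw [hN1v, hNdd, Set.disjoint_left]
          rintro x hxS ⟨⟨hxT, -⟩, hxn⟩
          exact hxn (by simpa using hST x hxS hxT)
        obtain ⟨NN, hNN, hNNv⟩ := glue N1 N hN1 hN hdisj
        refine ⟨NN, hNN, ?_⟩
        rw [hNNv, hN1v, hNdd]
        ext x
        simp only [mem_union, mem_diff, mem_insert_iff, mem_singleton_iff, mem_compl_iff, not_or]
        constructor
        · rintro (hxS | ⟨⟨-, hxn⟩, -⟩)
          · exact ⟨fun h => haS (h ▸ hxS), fun h => hbS (h ▸ hxS)⟩
          · exact hxn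
        · rintro ⟨hxa, hxb⟩
          by_cases hxS' : x ∈ S
          · exact Or.inl hxS'
          · have hxT' : x ∈ T := (hcov x).resolve_left hxS'
            exact Or.inr ⟨⟨hxT', hxa, hxb⟩, fun h => hxS' (h ▸ huS), fun h => hxS' (h ▸ hvS)⟩
  exact ⟨hmin.1.1, hmain⟩

end BicritAux

/-- If `G` is minimal bicritical and decomposes along a 2-vertex cut `{u, v}` into two
pieces `G₁, G₂` (each with the edge `uv` added if not already present), then no edge of
`Gᵢ` other than `uv` is deletable in `Gᵢ`. -/
theorem minimalBicritical_pieces_no_deletable_except_marker {V : Type*} [Fintype V]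
    (G : SimpleGraph V) (S1 S2 : Set V) (u v : V) (huv : u ≠ v)
    (hmin : MinimalBicritical G) (hcut : IsTwoCut G u v)
    (hcover : S1 ∪ S2 = Set.univ) (hinter : S1 ∩ S2 = {u, v})
    (hu1 : u ∈ S1) (hv1 : v ∈ S1) (hu2 : u ∈ S2) (hv2 : v ∈ S2)
    (hedges : ∀ a b : V, G.Adj a b → (a ∈ S1 ∧ b ∈ S1) ∨ (a ∈ S2 ∧ b ∈ S2))
    (hconn1 : (G.induce S1).Connected) (hconn2 : (G.induce S2).Connected)
    (hcard1 : 2 < Nat.card S1) (hcard2 : 2 < Nat.card S2) :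
    (∀ e ∈ (G.induce S1 ⊔ SimpleGraph.edge (⟨u, hu1⟩ : S1) (⟨v, hv1⟩ : S1)).edgeSet,
      e ≠ s((⟨u, hu1⟩ : S1), (⟨v, hv1⟩ : S1)) →
      ¬ Bicritical ((G.induce S1 ⊔ SimpleGraph.edge (⟨u, hu1⟩ : S1) (⟨v, hv1⟩ : S1)).deleteEdges {e})) ∧
    (∀ e ∈ (G.induce S2 ⊔ SimpleGraph.edge (⟨u, hu2⟩ : S2) (⟨v, hv2⟩ : S2)).edgeSet,
      e ≠ s((⟨u, hu2⟩ : S2), (⟨v, hv2⟩ : S2)) →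
      ¬ Bicritical ((G.induce S2 ⊔ SimpleGraph.edge (⟨u, hu2⟩ : S2) (⟨v, hv2⟩ : S2)).deleteEdges {e})) := by
  constructor
  · exact BicritAux.side G S1 S2 u v huv hmin hcover hinter hu1 hv1 hu2 hv2 hedges hconn2
      hcard1 hcard2
  · exact BicritAux.side G S2 S1 u v huv hmin (by rw [Set.union_comm]; exact hcover)
      (by rw [Set.inter_comm]; exact hinter) hu2 hv2 hu1 hv1
      (fun a b h => (hedges a b h).symm) hconn1 hcard2 hcard1
end
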